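/- arXiv:1705.01884 — 4 statements merged into one kernel-verified Lean document; each statement's English description precedes it below -/
import Mathlib

section
/- The set 𝓛 = {f ∈ Homeo⁺([0,1]) : fix(f) has no accumulation point in the open interval (0,1)} is co-Haar null in Homeo⁺([0,1]). -/
open MeasureTheory unitInterval Set

noncomputable section

/-- A subset of a group with a measurable structure is *Haar null* (Christensen) if it is
contained in a Borel (here: measurable) set `B` admitting a Borel probability measure `μ`
all of whose two-sided translates `g • B • h` are `μ`-null. -/
def IsHaarNull {G : Type*} [Group G] [MeasurableSpace G] (A : Set G) : Prop :=
  ∃ B : Set G, A ⊆ B ∧ MeasurableSet B ∧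
    ∃ μ : Measure G, IsProbabilityMeasure μ ∧ ∀ g h : G, μ ((fun b => g * b * h) '' B) = 0

/-- The group of self-homeomorphisms of a space, with `(f * g) x = f (g x)`. -/
instance Homeomorph.instGroupSelf {X : Type*} [TopologicalSpace X] : Group (X ≃ₜ X) where
  mul f g := g.trans f
  one := Homeomorph.refl X
  inv := Homeomorph.symm
  mul_assoc _ _ _ := Homeomorph.ext fun _ => rfl
  one_mul _ := Homeomorph.ext fun _ => rfl
  mul_one _ := Homeomorph.ext fun _ => rfl
  inv_mul_cancel f := Homeomorph.ext fun x => f.symm_apply_apply x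

/-- The topology of uniform convergence (= compact-open topology, as the underlying space is
compact) on the self-homeomorphism group. -/
instance Homeomorph.instTopologicalSpaceSelf {X : Type*} [TopologicalSpace X] :
    TopologicalSpace (X ≃ₜ X) :=
  TopologicalSpace.induced (fun f => (⟨⇑f, f.continuous⟩ : C(X, X))) inferInstance

/-- The Polish group `Homeo⁺([0,1])` of increasing homeomorphisms of `[0,1]`. -/
def HomeoPlusI : Subgroup (I ≃ₜ I) where
  carrier := {f | Monotone ⇑f}
  one_mem' := fun _ _ h => h
  mul_mem' := fun hf hg => hf.comp hg
  inv_mem' := by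
    intro f hf a b hab
    show f.symm a ≤ f.symm b
    by_contra hcon
    push_neg at hcon
    have h1 : f (f.symm b) ≤ f (f.symm a) := hf hcon.le
    rw [f.apply_symm_apply, f.apply_symm_apply] at h1
    have : a = b := le_antisymm hab h1
    subst this
    exact lt_irrefl _ hcon

instance : MeasurableSpace HomeoPlusI := borel _
instance : BorelSpace HomeoPlusI := ⟨rfl⟩

/-- The set of fixed points of `f ∈ Homeo⁺([0,1])`. -/
def fixSet (f : HomeoPlusI) : Set I := {x | (f : I ≃ₜ I) x = x}

/-!
Let `f_a` be translation by `a` conjugated through `logit : (0,1) ≃ ℝ`, and let `μ` be the image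
of a Gaussian under `a ↦ f_a`. Fix `g, h`. A fixed point `x` of `g f_a h` in a compact band
`[δ, 1 - δ]` gives the point `y = h x` with `logit (φ y) - logit y = a`, where `φ = (h g)⁻¹`.
The left side is a difference of monotone functions on a compact subinterval of `(0,1)`, hence
of bounded variation, so by the Banach indicatrix argument almost every value `a` is taken only
finitely often. Hence for a.e. `a` the fixed points of `g f_a h` do not accumulate in `(0,1)`.
-/

open Filter Topology

section Metric

variable {X : Type*} [MetricSpace X]

theorem Set.Finite.exists_pos_forall_le_dist {S : Set X} (hS : S.Finite) :
    ∃ γ > 0, ∀ x ∈ S, ∀ y ∈ S, x ≠ y → γ ≤ dist x y := by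
  set D : Set (X × X) := {z | z.1 ∈ S ∧ z.2 ∈ S ∧ z.1 ≠ z.2}
  have hD : D.Finite := (hS.prod hS).subset fun z hz => ⟨hz.1, hz.2.1⟩
  rcases D.eq_empty_or_nonempty with hD₀ | hD₀
  · exact ⟨1, one_pos, fun x hx y hy hxy => (hD₀.subset (⟨hx, hy, hxy⟩ : (x, y) ∈ D)).elim⟩
  · obtain ⟨z, hz, hmin⟩ := D.exists_min_image (fun z => dist z.1 z.2) hD hD₀
    exact ⟨dist z.1 z.2, dist_pos.2 hz.2.2, fun x hx y hy hxy => hmin (x, y) ⟨hx, hy, hxy⟩⟩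

lemma Set.infinite_of_forall_exists_dist_mem_Icc {S : Set X}
    (h : ∀ n : ℕ, ∃ m : ℕ, ∃ x ∈ S, ∃ y ∈ S, dist x y ∈ Icc (1 / (m + 1 : ℝ)) (1 / (n + 1))) :
    S.Infinite := by
  intro hS
  obtain ⟨γ, hγ, hsep⟩ := hS.exists_pos_forall_le_dist
  obtain ⟨n, hn⟩ := exists_nat_one_div_lt hγ
  obtain ⟨m, x, hx, y, hy, hlo, hhi⟩ := h n
  have hxy : x ≠ y := by
    rintro rfl
    rw [dist_self] at hlo
    exact hlo.not_gt Nat.one_div_pos_of_nat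
  linarith [hsep x hx y hy hxy]

lemma AccPt.exists_dist_mem_Icc {x : X} {S : Set X} (hx : AccPt x (𝓟 S)) (n : ℕ) :
    ∃ m : ℕ, ∃ y ∈ S, dist x y ∈ Icc (1 / (m + 1 : ℝ)) (1 / (n + 1)) := by
  obtain ⟨y, ⟨hyball, hyS⟩, hyx⟩ :=
    accPt_iff_nhds.1 hx _ (Metric.ball_mem_nhds x (Nat.one_div_pos_of_nat (n := n)))
  obtain ⟨m, hm⟩ := exists_nat_one_div_lt (dist_pos.2 hyx.symm)
  exact ⟨m, y, hyS, hm.le, (dist_comm x y ▸ Metric.mem_ball.1 hyball).le⟩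

end Metric

section LevelSets

open ENNReal

def gridPt (p q : ℝ) (n i : ℕ) : ℝ := p + i * ((q - p) / (n + 1))

variable {p q : ℝ} {n : ℕ}

lemma gridPt_zero : gridPt p q n 0 = p := by simp [gridPt]

lemma gridPt_last : gridPt p q n (n + 1) = q := by
  simp only [gridPt]; push_cast; field_simp; ring

lemma gridPt_succ_sub (i : ℕ) : gridPt p q n (i + 1) - gridPt p q n i = (q - p) / (n + 1) := by
  simp only [gridPt]; push_cast; ring

lemma gridPt_mono (hpq : p ≤ q) : Monotone (gridPt p q n) := fun i j hij => by
  have : 0 ≤ (q - p) / (n + 1) := div_nonneg (sub_nonneg.2 hpq) (by positivity)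
  simp only [gridPt]; gcongr

lemma gridPt_mem_Icc (hpq : p ≤ q) {i : ℕ} (hi : i ≤ n + 1) : gridPt p q n i ∈ Icc p q :=
  ⟨gridPt_zero.symm.le.trans (gridPt_mono hpq (Nat.zero_le i)),
    (gridPt_mono hpq hi).trans gridPt_last.le⟩

lemma exists_gridPt_le_le {s : ℝ} (hs : s ∈ Icc p q) :
    ∃ i < n + 1, gridPt p q n i ≤ s ∧ s ≤ gridPt p q n (i + 1) := by
  classical
  have hex : ∃ i, s ≤ gridPt p q n (i + 1) := ⟨n, gridPt_last ▸ hs.2⟩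
  refine ⟨Nat.find hex, Nat.lt_succ_of_le (Nat.find_min' hex (gridPt_last ▸ hs.2)), ?_,
    Nat.find_spec hex⟩
  rcases h : Nat.find hex with _ | j
  · exact gridPt_zero ▸ hs.1
  · exact (not_le.1 (Nat.find_min hex (h ▸ Nat.lt_succ_self j))).le

-- If `|F t - F s| ≤ V t - V s`, the `i`-th ball contains the `F`-image of the `i`-th grid cell.
def levelCount (F V : ℝ → ℝ) (p q : ℝ) (n : ℕ) (c : ℝ) : ℝ≥0∞ :=
  ∑ i ∈ Finset.range (n + 1), (Metric.closedBall (F (gridPt p q n i))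
    (V (gridPt p q n (i + 1)) - V (gridPt p q n i))).indicator 1 c

variable {F V : ℝ → ℝ}

lemma measurable_levelCount : Measurable (levelCount F V p q n) :=
  Finset.measurable_sum _ fun _ _ => measurable_one.indicator measurableSet_closedBall

variable (hFV : ∀ s ∈ Icc p q, ∀ t ∈ Icc p q, s ≤ t → |F t - F s| ≤ V t - V s)
include hFV

lemma lintegral_levelCount (hpq : p ≤ q) :
    ∫⁻ c, levelCount F V p q n c = ENNReal.ofReal (2 * (V q - V p)) := by
  have hrad : ∀ i ∈ Finset.range (n + 1),
      0 ≤ 2 * (V (gridPt p q n (i + 1)) - V (gridPt p q n i)) :=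
    fun i hi => mul_nonneg zero_le_two <| (abs_nonneg _).trans <|
      hFV _ (gridPt_mem_Icc hpq (Finset.mem_range.1 hi).le) _
        (gridPt_mem_Icc hpq (Finset.mem_range.1 hi)) (gridPt_mono hpq (Nat.le_succ i))
  unfold levelCount
  rw [lintegral_finsetSum _ fun _ _ => measurable_one.indicator measurableSet_closedBall]
  simp only [lintegral_indicator_one measurableSet_closedBall, Real.volume_closedBall]
  rw [← ofReal_sum_of_nonneg hrad, ← Finset.mul_sum,
    Finset.sum_range_sub (fun i => V (gridPt p q n i)), gridPt_zero, gridPt_last]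

lemma card_le_levelCount (hpq : p ≤ q) {c : ℝ} {T : Finset ℝ}
    (hT : ↑T ⊆ {t ∈ Icc p q | F t = c})
    (hsep : ∀ x ∈ T, ∀ y ∈ T, x ≠ y → (q - p) / (n + 1) < dist x y) :
    (T.card : ℝ≥0∞) ≤ levelCount F V p q n c := by
  classical
  choose! idx hidx_lt hidx using fun s (hs : s ∈ Icc p q) => exists_gridPt_le_le (n := n) hs
  have hcount : levelCount F V p q n c = ((Finset.range (n + 1)).filter fun i =>
      c ∈ Metric.closedBall (F (gridPt p q n i))
        (V (gridPt p q n (i + 1)) - V (gridPt p q n i))).card := by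
    simp only [levelCount, indicator_apply, Pi.one_apply, Finset.sum_boole]
  rw [hcount, Nat.cast_le]
  refine Finset.card_le_card_of_injOn idx (fun s hs => ?_) fun s hs s' hs' hss' => ?_
  · obtain ⟨hsI, hFs⟩ := hT hs
    obtain ⟨hlo, hhi⟩ := hidx s hsI
    have hi := hidx_lt s hsI
    refine Finset.mem_filter.2 ⟨Finset.mem_range.2 hi, ?_⟩
    have hmem := gridPt_mem_Icc hpq hi.le
    have hmem' := gridPt_mem_Icc hpq hi
    rw [Metric.mem_closedBall, ← hFs, Real.dist_eq]
    linarith [hFV _ hmem s hsI hlo, abs_nonneg (F (gridPt p q n (idx s + 1)) - F s),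
      hFV s hsI _ hmem' hhi]
  · by_contra hne
    have h1 := hidx s (hT hs).1
    have h2 := hss' ▸ hidx s' (hT hs').1
    have := Real.dist_le_of_mem_Icc h1 h2
    rw [gridPt_succ_sub] at this
    exact (hsep s hs s' hs' hne).not_ge this

-- By Fatou, `liminf levelCount` has finite integral, but it is `∞` wherever `{F = c}` is infinite.
theorem ae_finite_setOf_eq_of_abs_sub_le : ∀ᵐ c, {t ∈ Icc p q | F t = c}.Finite := by
  rcases lt_or_ge q p with hqp | hpq
  · simp [Icc_eq_empty_of_lt hqp]
  have hfatou : ∫⁻ c, liminf (fun n => levelCount F V p q n c) atTop ≠ ⊤ := by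
    refine ((lintegral_liminf_le fun n => measurable_levelCount).trans_lt ?_).ne
    simp only [lintegral_levelCount hFV hpq, liminf_const]
    exact ofReal_lt_top
  filter_upwards [ae_lt_top (Measurable.liminf fun n => measurable_levelCount) hfatou] with c hc
  by_contra hinf
  obtain ⟨K, hK⟩ := ENNReal.exists_nat_gt hc.ne
  obtain ⟨T, hTsub, rfl⟩ := Set.Infinite.exists_subset_card_eq hinf K
  obtain ⟨γ, hγ, hsep⟩ := T.finite_toSet.exists_pos_forall_le_dist
  have hmesh : ∀ᶠ n : ℕ in atTop, (q - p) / (n + 1) < γ := by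
    simpa [div_eq_mul_inv] using
      (tendsto_one_div_add_atTop_nhds_zero_nat.const_mul (q - p)).eventually_lt_const
        (by simpa using hγ)
  refine hK.not_ge (le_liminf_of_le (by isBoundedDefault) (hmesh.mono fun n hn => ?_))
  exact card_le_levelCount hFV hpq hTsub fun x hx y hy hxy => hn.trans_le (hsep x hx y hy hxy)

end LevelSets

namespace HomeoPlusI

def toContinuousMap (f : HomeoPlusI) : C(I, I) := ⟨(f : I ≃ₜ I), (f : I ≃ₜ I).continuous⟩

lemma isInducing_toContinuousMap : IsInducing toContinuousMap :=
  (IsInducing.induced fun f : I ≃ₜ I => (⟨f, f.continuous⟩ : C(I, I))).comp IsInducing.subtypeVal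

lemma continuous_eval : Continuous fun z : HomeoPlusI × I => (z.1 : I ≃ₜ I) z.2 :=
  ContinuousEval.continuous_eval.comp (isInducing_toContinuousMap.continuous.prodMap continuous_id)

lemma continuous_mul_mul (g h : HomeoPlusI) : Continuous fun b : HomeoPlusI => g * b * h :=
  isInducing_toContinuousMap.continuous_iff.2 <| show Continuous fun b =>
      (toContinuousMap g).comp ((toContinuousMap b).comp (toContinuousMap h)) from
    (ContinuousMap.continuous_postcomp (toContinuousMap g)).comp <|
      (ContinuousMap.continuous_precomp (toContinuousMap h)).comp
        isInducing_toContinuousMap.continuous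

lemma strictMono (f : HomeoPlusI) : StrictMono (f : I ≃ₜ I) :=
  f.2.strictMono_of_injective (f : I ≃ₜ I).injective

lemma map_zero (f : HomeoPlusI) : (f : I ≃ₜ I) 0 = 0 :=
  le_antisymm (by simpa using f.2 (nonneg' : 0 ≤ (f : I ≃ₜ I).symm 0)) nonneg'

lemma map_one (f : HomeoPlusI) : (f : I ≃ₜ I) 1 = 1 :=
  le_antisymm le_one' (by simpa using f.2 (le_one' : (f : I ≃ₜ I).symm 1 ≤ 1))

lemma mapsTo_Ioo (f : HomeoPlusI) : MapsTo (f : I ≃ₜ I) (Ioo 0 1) (Ioo 0 1) :=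
  fun _ hx => ⟨map_zero f ▸ strictMono f hx.1, map_one f ▸ strictMono f hx.2⟩

lemma isClosed_fixSet (f : HomeoPlusI) : IsClosed (fixSet f) :=
  isClosed_eq (f : I ≃ₜ I).continuous continuous_id

end HomeoPlusI

def logit (x : ℝ) : ℝ := Real.log (x / (1 - x))

lemma logit_strictMonoOn : StrictMonoOn logit (Ioo 0 1) := by
  intro x hx y hy hxy
  have hx' : 0 < 1 - x := sub_pos.2 hx.2
  have hy' : 0 < 1 - y := sub_pos.2 hy.2
  refine Real.log_lt_log (div_pos hx.1 hx') ?_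
  rw [div_lt_div_iff₀ hx' hy']
  nlinarith

-- `logit⁻¹ (logit x + a)`, written so that it extends to `[0,1]`.
def logitShift (a x : ℝ) : ℝ := x * Real.exp a / (x * Real.exp a + (1 - x))

lemma logitShift_denom_pos (a : ℝ) {x : ℝ} (hx : x ∈ Icc (0 : ℝ) 1) :
    0 < x * Real.exp a + (1 - x) := by
  rcases hx.1.eq_or_lt with rfl | hx₀
  · simp
  · exact add_pos_of_pos_of_nonneg (by positivity) (sub_nonneg.2 hx.2)

lemma logitShift_mem_Icc (a : ℝ) {x : ℝ} (hx : x ∈ Icc (0 : ℝ) 1) :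
    logitShift a x ∈ Icc (0 : ℝ) 1 := by
  have hD := logitShift_denom_pos a hx
  refine ⟨div_nonneg (by have := hx.1; positivity) hD.le, (div_le_one hD).2 ?_⟩
  linarith [hx.2]

lemma logitShift_neg_logitShift (a : ℝ) {x : ℝ} (hx : x ∈ Icc (0 : ℝ) 1) :
    logitShift (-a) (logitShift a x) = x := by
  have hD := (logitShift_denom_pos a hx).ne'
  simp only [logitShift, Real.exp_neg]
  field_simp
  ring

lemma logitShift_le_logitShift_iff (a : ℝ) {x y : ℝ} (hx : x ∈ Icc (0 : ℝ) 1)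
    (hy : y ∈ Icc (0 : ℝ) 1) : logitShift a x ≤ logitShift a y ↔ x ≤ y := by
  rw [logitShift, logitShift, div_le_div_iff₀ (logitShift_denom_pos a hx)
    (logitShift_denom_pos a hy), ← sub_nonneg, ← sub_nonneg (b := x)]
  have key : y * Real.exp a * (x * Real.exp a + (1 - x)) - x * Real.exp a *
      (y * Real.exp a + (1 - y)) = Real.exp a * (y - x) := by ring
  rw [key]
  exact mul_nonneg_iff_of_pos_left (Real.exp_pos a)

lemma logit_logitShift (a : ℝ) {x : ℝ} (hx : x ∈ Ioo (0 : ℝ) 1) :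
    logit (logitShift a x) = logit x + a := by
  have hD := logitShift_denom_pos a (Ioo_subset_Icc_self hx)
  have hx' : 0 < 1 - x := sub_pos.2 hx.2
  have hcompl : 1 - logitShift a x = (1 - x) / (x * Real.exp a + (1 - x)) := by
    rw [logitShift, eq_div_iff hD.ne', sub_mul, div_mul_cancel₀ _ hD.ne']
    ring
  have hratio : logitShift a x / (1 - logitShift a x) = x / (1 - x) * Real.exp a := by
    rw [hcompl, logitShift, div_div_div_cancel_right₀ hD.ne']
    ring
  rw [logit, logit, hratio, Real.log_mul (div_pos hx.1 hx').ne' (Real.exp_pos a).ne',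
    Real.log_exp]

def logitShiftOrderIso (a : ℝ) : I ≃o I where
  toFun x := ⟨logitShift a x, logitShift_mem_Icc a x.2⟩
  invFun x := ⟨logitShift (-a) x, logitShift_mem_Icc (-a) x.2⟩
  left_inv x := Subtype.ext (logitShift_neg_logitShift a x.2)
  right_inv x := Subtype.ext (by simpa using logitShift_neg_logitShift (-a) x.2)
  map_rel_iff' {x y} := logitShift_le_logitShift_iff a x.2 y.2

def logitTranslate (a : ℝ) : HomeoPlusI :=
  ⟨(logitShiftOrderIso a).toHomeomorph, (logitShiftOrderIso a).monotone⟩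

lemma coe_logitTranslate_apply (a : ℝ) (x : I) :
    (((logitTranslate a : I ≃ₜ I) x : I) : ℝ) = logitShift a x := rfl

lemma continuous_logitTranslate : Continuous logitTranslate := by
  refine HomeoPlusI.isInducing_toContinuousMap.continuous_iff.2 <|
    ContinuousMap.continuous_of_continuous_uncurry _ <| Continuous.subtype_mk ?_ _
  exact Continuous.div (by fun_prop) (by fun_prop)
    fun z => (logitShift_denom_pos z.1 z.2.2).ne'

lemma ae_finite_setOf_logitTranslate_eq (φ : HomeoPlusI) {u v : I} (hu : 0 < u) (hv : v < 1) :
    ∀ᵐ a, {y ∈ Icc u v | (logitTranslate a : I ≃ₜ I) y = (φ : I ≃ₜ I) y}.Finite := by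
  set P : ℝ → ℝ := fun t => logit ((φ : I ≃ₜ I) (projIcc 0 1 zero_le_one t))
  have hIoo : ∀ t ∈ Icc (u : ℝ) v, t ∈ Ioo (0 : ℝ) 1 := fun t ht =>
    ⟨lt_of_lt_of_le hu ht.1, ht.2.trans_lt hv⟩
  have hprojIoo : ∀ t ∈ Icc (u : ℝ) v, projIcc 0 1 zero_le_one t ∈ Ioo 0 1 := fun t ht => by
    rw [projIcc_of_mem _ (Ioo_subset_Icc_self (hIoo t ht))]
    exact hIoo t ht
  have hP : MonotoneOn P (Icc (u : ℝ) v) := fun s hs t ht hst =>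
    logit_strictMonoOn.monotoneOn (HomeoPlusI.mapsTo_Ioo φ (hprojIoo s hs))
      (HomeoPlusI.mapsTo_Ioo φ (hprojIoo t ht)) (φ.2 (monotone_projIcc _ hst))
  have hQ : MonotoneOn logit (Icc (u : ℝ) v) := logit_strictMonoOn.monotoneOn.mono hIoo
  have hFV : ∀ s ∈ Icc (u : ℝ) v, ∀ t ∈ Icc (u : ℝ) v, s ≤ t →
      |(P t - logit t) - (P s - logit s)| ≤ (P t + logit t) - (P s + logit s) := by
    intro s hs t ht hst
    have := hP hs ht hst
    have := hQ hs ht hst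
    rw [abs_le]
    constructor <;> linarith
  filter_upwards [ae_finite_setOf_eq_of_abs_sub_le hFV] with a ha
  refine (ha.preimage Subtype.val_injective.injOn).subset ?_
  rintro y ⟨hy, hfix⟩
  have hyR : (y : ℝ) ∈ Icc (u : ℝ) v := hy
  refine ⟨hyR, ?_⟩
  simp only [P, projIcc_val]
  rw [← hfix, coe_logitTranslate_apply, logit_logitShift a (hIoo y hyR)]
  ring

lemma ae_finite_fixSet_mul_logitTranslate_mul_inter (g h : HomeoPlusI) {u v : I} (hu : 0 < u)
    (hv : v < 1) : ∀ᵐ a, (fixSet (g * logitTranslate a * h) ∩ Icc u v).Finite := by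
  have hu' : 0 < (h : I ≃ₜ I) u := HomeoPlusI.map_zero h ▸ HomeoPlusI.strictMono h hu
  have hv' : (h : I ≃ₜ I) v < 1 := HomeoPlusI.map_one h ▸ HomeoPlusI.strictMono h hv
  filter_upwards [ae_finite_setOf_logitTranslate_eq (h * g)⁻¹ hu' hv'] with a ha
  refine (ha.preimage (h : I ≃ₜ I).injective.injOn).subset ?_
  rintro x ⟨hfix, hx⟩
  refine ⟨⟨h.2 hx.1, h.2 hx.2⟩, ?_⟩
  show _ = (g : I ≃ₜ I).symm ((h : I ≃ₜ I).symm ((h : I ≃ₜ I) x))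
  rw [Homeomorph.symm_apply_apply, Homeomorph.eq_symm_apply]
  exact hfix

def bandLeft (k : ℕ) : I := ⟨1 / (k + 1), div_mem zero_le_one (by positivity) (by simp)⟩

def band (k : ℕ) : Set I := Icc (bandLeft k) (σ (bandLeft k))

lemma bandLeft_pos (k : ℕ) : 0 < bandLeft k :=
  show (0 : ℝ) < 1 / (k + 1) from Nat.one_div_pos_of_nat

lemma symm_bandLeft_lt_one (k : ℕ) : σ (bandLeft k) < 1 :=
  show 1 - 1 / (k + 1 : ℝ) < 1 from sub_lt_self _ Nat.one_div_pos_of_nat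

lemma exists_band_mem_nhds {x : I} (hx : (x : ℝ) ∈ Ioo 0 1) : ∃ k, band k ∈ 𝓝 x := by
  obtain ⟨k, hk⟩ := exists_nat_one_div_lt (lt_min hx.1 (sub_pos.2 hx.2))
  refine ⟨k, Icc_mem_nhds (show 1 / (k + 1 : ℝ) < x from hk.trans_le (min_le_left _ _)) ?_⟩
  show (x : ℝ) < 1 - 1 / (k + 1)
  linarith [hk.trans_le (min_le_right _ _)]

def fixPairs (J : Set I) (δ ε : ℝ) : Set HomeoPlusI :=
  {f | ∃ x ∈ fixSet f ∩ J, ∃ y ∈ fixSet f ∩ J, dist x y ∈ Icc δ ε}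

lemma isClosed_fixPairs {J : Set I} (hJ : IsClosed J) (δ ε : ℝ) : IsClosed (fixPairs J δ ε) := by
  set C : Set (HomeoPlusI × I) := {z | z.2 ∈ fixSet z.1 ∩ J}
  have hC : IsClosed C :=
    (isClosed_eq HomeoPlusI.continuous_eval continuous_snd).inter (hJ.preimage continuous_snd)
  have hD : IsClosed {z : HomeoPlusI × (I × I) |
      ((z.1, z.2.1) ∈ C ∧ (z.1, z.2.2) ∈ C) ∧ dist z.2.1 z.2.2 ∈ Icc δ ε} :=
    ((hC.preimage (continuous_fst.prodMk (continuous_fst.comp continuous_snd))).inter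
      (hC.preimage (continuous_fst.prodMk (continuous_snd.comp continuous_snd)))).inter
      (isClosed_Icc.preimage (continuous_dist.comp continuous_snd))
  convert isClosedMap_fst_of_compactSpace _ hD using 1
  ext f
  constructor
  · rintro ⟨x, hx, y, hy, hd⟩
    exact ⟨(f, x, y), ⟨⟨hx, hy⟩, hd⟩, rfl⟩
  · rintro ⟨⟨f, x, y⟩, ⟨⟨hx, hy⟩, hd⟩, rfl⟩
    exact ⟨x, hx, y, hy, hd⟩

-- An `F_σδ` set between the complement of `𝓛` and `{f | ∃ k, (fixSet f ∩ band k).Infinite}`.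
def fixHull : Set HomeoPlusI :=
  ⋃ k : ℕ, ⋂ n : ℕ, ⋃ m : ℕ, fixPairs (band k) (1 / (m + 1)) (1 / (n + 1))

lemma measurableSet_fixHull : MeasurableSet fixHull :=
  .iUnion fun _ => .iInter fun _ => .iUnion fun _ =>
    (isClosed_fixPairs isClosed_Icc _ _).measurableSet

lemma compl_subset_fixHull :
    {f : HomeoPlusI | ∀ x : I, (x : ℝ) ∈ Ioo (0 : ℝ) 1 → ¬ AccPt x (𝓟 (fixSet f))}ᶜ ⊆
      fixHull := by
  intro f hf
  simp only [mem_compl_iff, mem_ofPred_eq, not_forall, not_not] at hf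
  obtain ⟨x, hx, hacc⟩ := hf
  obtain ⟨k, hk⟩ := exists_band_mem_nhds hx
  have hxfix : x ∈ fixSet f :=
    (HomeoPlusI.isClosed_fixSet f).closure_eq ▸ mem_closure_iff_clusterPt.2 hacc.clusterPt
  have hacc' : AccPt x (𝓟 (fixSet f ∩ band k)) := accPt_iff_frequently.2 <|
    ((accPt_iff_frequently.1 hacc).and_eventually hk).mono fun y hy => ⟨hy.1.1, hy.1.2, hy.2⟩
  refine mem_iUnion.2 ⟨k, mem_iInter.2 fun n => ?_⟩
  obtain ⟨m, y, hy, hd⟩ := hacc'.exists_dist_mem_Icc n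
  exact mem_iUnion.2 ⟨m, x, ⟨hxfix, mem_of_mem_nhds hk⟩, y, hy, hd⟩

lemma ae_mul_logitTranslate_mul_notMem_fixHull (g h : HomeoPlusI) :
    ∀ᵐ a, g * logitTranslate a * h ∉ fixHull := by
  simp only [fixHull, mem_iUnion, not_exists]
  refine ae_all_iff.2 fun k => ?_
  filter_upwards [ae_finite_fixSet_mul_logitTranslate_mul_inter g h (bandLeft_pos k)
    (symm_bandLeft_lt_one k)] with a ha hmem
  exact Set.infinite_of_forall_exists_dist_mem_Icc (fun n => mem_iUnion.1 (mem_iInter.1 hmem n)) ha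

/-- The set of `f ∈ Homeo⁺([0,1])` whose fixed point set has no accumulation point in `(0,1)`
is co-Haar null. -/
theorem stmt_2 :
    IsHaarNull
      ({f : HomeoPlusI |
        ∀ x : I, (x : ℝ) ∈ Set.Ioo (0 : ℝ) 1 → ¬ AccPt x (Filter.principal (fixSet f))}ᶜ) := by
  refine ⟨fixHull, compl_subset_fixHull, measurableSet_fixHull,
    (ProbabilityTheory.gaussianReal 0 1).map logitTranslate,
    Measure.isProbabilityMeasure_map continuous_logitTranslate.aemeasurable, fun g h => ?_⟩
  have himage : (fun b => g * b * h) '' fixHull = (fun b => g⁻¹ * b * h⁻¹) ⁻¹' fixHull :=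
    congrFun (image_eq_preimage_of_inverse (fun b => by group) (fun b => by group)) _
  rw [himage, Measure.map_apply continuous_logitTranslate.measurable
    (measurableSet_fixHull.preimage (HomeoPlusI.continuous_mul_mul _ _).measurable),
    measure_eq_zero_iff_ae_notMem]
  exact (ProbabilityTheory.gaussianReal_absolutelyContinuous 0 one_ne_zero).ae_le
    (ae_mul_logitTranslate_mul_notMem_fixHull g⁻¹ h⁻¹)
end
end

section
/- Let K ⊆ Homeo⁺([0,1]) be a compact set and let x₀, y₀ ∈ (0,1). Then there exists g ∈ Homeo⁺([0,1]) with g(x₀) = y₀ such that for every f ∈ K, both 0 and 1 are accumulation points of fix(g⁻¹ ∘ f). -/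
open MeasureTheory unitInterval Set

noncomputable section

/-!
Let `hi` and `lo` be the pointwise supremum and infimum of `K ∪ {id}`. By compactness they are
continuous, `hi 0 = 0`, `lo 1 = 1`, `lo > 0` on `(0, 1]` and `hi < 1` on `[0, 1)`. Choose nodes
`x₀ = a 0 > a 1 > ⋯ → 0` so fast that `hi (a (n + 1)) < lo (a n)`, and let `g` be, on `[0, x₀]`,
the piecewise linear map through `(x₀, y₀)`, `(a n, hi (a n))` for odd `n` and `(a n, lo (a n))`
for even `n > 0`; these values decrease, so `g` is increasing. Every `f ∈ K` lies between `lo`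
and `hi`, hence `g - f` changes sign on each `[a (n + 1), a n]` with `n ≥ 1`, and the
intermediate value theorem gives fixed points of `g⁻¹ f` accumulating at `0`. On `[x₀, 1]` the
same construction is applied to the reflected envelopes `1 - lo (1 - t)` and `1 - hi (1 - t)`.
-/

open Filter Topology

section Extension

variable (f : HomeoPlusI)

lemma HomeoPlusI.map_zero_s8 : (f : I ≃ₜ I) 0 = 0 := by
  obtain ⟨x, hx⟩ := (f : I ≃ₜ I).surjective 0
  have h : (f : I ≃ₜ I) 0 ≤ (f : I ≃ₜ I) x := f.2 nonneg'
  exact le_antisymm (hx ▸ h) nonneg'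

lemma HomeoPlusI.map_one_s8 : (f : I ≃ₜ I) 1 = 1 := by
  obtain ⟨x, hx⟩ := (f : I ≃ₜ I).surjective 1
  have h : (f : I ≃ₜ I) x ≤ (f : I ≃ₜ I) 1 := f.2 le_one'
  exact le_antisymm le_one' (hx ▸ h)

lemma HomeoPlusI.strictMono_s8 : StrictMono (f : I ≃ₜ I) :=
  f.2.strictMono_of_injective (f : I ≃ₜ I).injective

lemma mem_fixSet_inv_mul_iff {g : HomeoPlusI} {x : I} :
    x ∈ fixSet (g⁻¹ * f) ↔ (f : I ≃ₜ I) x = (g : I ≃ₜ I) x :=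
  (g : I ≃ₜ I).symm_apply_eq

def realExtend : ℝ → ℝ := IccExtend zero_le_one fun x => ((f : I ≃ₜ I) x : ℝ)

lemma realExtend_apply (x : ℝ) :
    realExtend f x = ((f : I ≃ₜ I) (projIcc 0 1 zero_le_one x) : ℝ) := rfl

lemma continuous_realExtend_uncurry :
    Continuous fun p : ℝ × HomeoPlusI => realExtend p.2 p.1 := by
  have hC : Continuous fun f : HomeoPlusI => (⟨_, (f : I ≃ₜ I).continuous⟩ : C(I, I)) :=
    Continuous.comp (g := fun f : I ≃ₜ I => (⟨f, f.continuous⟩ : C(I, I)))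
      continuous_induced_dom continuous_subtype_val
  exact continuous_subtype_val.comp <| continuous_eval.comp <|
    (hC.comp continuous_snd).prodMk ((continuous_projIcc (h := zero_le_one)).comp continuous_fst)

lemma continuous_realExtend : Continuous (realExtend f) :=
  continuous_realExtend_uncurry.comp (continuous_id.prodMk continuous_const)

lemma continuous_realExtend_apply (x : ℝ) : Continuous fun f : HomeoPlusI => realExtend f x :=
  continuous_realExtend_uncurry.comp (continuous_const.prodMk continuous_id)

lemma realExtend_zero : realExtend f 0 = 0 := by
  rw [realExtend_apply, projIcc_left]
  exact congrArg Subtype.val (HomeoPlusI.map_zero_s8 f)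

lemma realExtend_one : realExtend f 1 = 1 := by
  rw [realExtend_apply, projIcc_right]
  exact congrArg Subtype.val (HomeoPlusI.map_one_s8 f)

lemma realExtend_le_one (x : ℝ) : realExtend f x ≤ 1 := le_one _

lemma realExtend_pos {x : ℝ} (hx : 0 < x) : 0 < realExtend f x := by
  have h : (0 : I) < projIcc 0 1 zero_le_one x :=
    nonneg'.lt_of_ne fun h => hx.not_ge ((projIcc_eq_left zero_lt_one).1 h.symm)
  simpa [realExtend_apply, HomeoPlusI.map_zero_s8] using HomeoPlusI.strictMono_s8 f h

lemma realExtend_lt_one {x : ℝ} (hx : x < 1) : realExtend f x < 1 := by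
  have h : projIcc 0 1 zero_le_one x < 1 :=
    le_one'.lt_of_ne fun h => hx.not_ge ((projIcc_eq_right zero_lt_one).1 h)
  simpa [realExtend_apply, HomeoPlusI.map_one_s8] using HomeoPlusI.strictMono_s8 f h

end Extension

section Envelope

variable (K : Set HomeoPlusI)

def upperEnvelope (x : ℝ) : ℝ := sSup ((fun f => realExtend f x) '' K)

def lowerEnvelope (x : ℝ) : ℝ := sInf ((fun f => realExtend f x) '' K)

variable {K}

lemma realExtend_le_upperEnvelope {f : HomeoPlusI} (hf : f ∈ K) (x : ℝ) :
    realExtend f x ≤ upperEnvelope K x :=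
  le_csSup ⟨1, by rintro _ ⟨f, -, rfl⟩; exact realExtend_le_one f x⟩ (mem_image_of_mem _ hf)

lemma lowerEnvelope_le_realExtend {f : HomeoPlusI} (hf : f ∈ K) (x : ℝ) :
    lowerEnvelope K x ≤ realExtend f x :=
  csInf_le ⟨0, by rintro _ ⟨f, -, rfl⟩; exact nonneg _⟩ (mem_image_of_mem _ hf)

lemma lowerEnvelope_le_upperEnvelope (hne : K.Nonempty) (x : ℝ) :
    lowerEnvelope K x ≤ upperEnvelope K x :=
  (lowerEnvelope_le_realExtend hne.some_mem x).trans (realExtend_le_upperEnvelope hne.some_mem x)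

lemma continuous_upperEnvelope (hK : IsCompact K) : Continuous (upperEnvelope K) :=
  hK.continuous_sSup continuous_realExtend_uncurry

lemma continuous_lowerEnvelope (hK : IsCompact K) : Continuous (lowerEnvelope K) :=
  hK.continuous_sInf continuous_realExtend_uncurry

lemma upperEnvelope_zero (hne : K.Nonempty) : upperEnvelope K 0 = 0 := by
  simp [upperEnvelope, realExtend_zero, hne.image_const]

lemma lowerEnvelope_one (hne : K.Nonempty) : lowerEnvelope K 1 = 1 := by
  simp [lowerEnvelope, realExtend_one, hne.image_const]

lemma lowerEnvelope_pos (hK : IsCompact K) (hne : K.Nonempty) {x : ℝ} (hx : 0 < x) :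
    0 < lowerEnvelope K x := by
  obtain ⟨f, -, hf⟩ := (hK.image (continuous_realExtend_apply x)).sInf_mem (hne.image _)
  rw [lowerEnvelope, ← hf]
  exact realExtend_pos f hx

lemma upperEnvelope_lt_one (hK : IsCompact K) (hne : K.Nonempty) {x : ℝ} (hx : x < 1) :
    upperEnvelope K x < 1 := by
  obtain ⟨f, -, hf⟩ := (hK.image (continuous_realExtend_apply x)).sSup_mem (hne.image _)
  rw [upperEnvelope, ← hf]
  exact realExtend_lt_one f hx

end Envelope

section Interpolation

lemma exists_apply_succ_lt_and_le {α : Type*} [LinearOrder α] {a : ℕ → α} {y : α}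
    (h : ∃ n, a n < y) (h0 : y ≤ a 0) : ∃ n, a (n + 1) < y ∧ y ≤ a n := by
  classical
  obtain ⟨k, hk⟩ : ∃ k, Nat.find h = k + 1 :=
    Nat.exists_eq_succ_of_ne_zero fun h' => (h' ▸ Nat.find_spec h).not_ge h0
  exact ⟨k, hk ▸ Nat.find_spec h, not_lt.1 (Nat.find_min h (hk ▸ k.lt_succ_self))⟩

lemma hasSum_sub_succ {v : ℕ → ℝ} (hv : Antitone v) (hv0 : Tendsto v atTop (𝓝 0)) :
    HasSum (fun n => v n - v (n + 1)) (v 0) :=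
  (hasSum_iff_tendsto_nat_of_nonneg (fun n => sub_nonneg.2 (hv n.le_succ)) _).2 <| by
    simpa only [Finset.sum_range_sub', sub_zero] using (tendsto_const_nhds (x := v 0)).sub hv0

def ramp (p q x : ℝ) : ℝ := max 0 (min 1 ((x - p) / (q - p)))

variable {p q x y : ℝ}

lemma continuous_ramp (p q : ℝ) : Continuous (ramp p q) := by
  unfold ramp
  fun_prop

lemma ramp_nonneg : 0 ≤ ramp p q x := le_max_left _ _

lemma ramp_le_one : ramp p q x ≤ 1 := max_le zero_le_one (min_le_left _ _)

lemma ramp_eq_zero (hpq : p < q) (hx : x ≤ p) : ramp p q x = 0 :=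
  max_eq_left (min_le_of_right_le (div_nonpos_of_nonpos_of_nonneg (by linarith) (by linarith)))

lemma ramp_eq_one (hpq : p < q) (hx : q ≤ x) : ramp p q x = 1 := by
  rw [ramp, min_eq_left ((one_le_div (sub_pos.2 hpq)).2 (by linarith)), max_eq_right zero_le_one]

lemma monotone_ramp (hpq : p ≤ q) : Monotone (ramp p q) := fun _ _ h =>
  max_le_max le_rfl (min_le_min le_rfl (div_le_div_of_nonneg_right (by linarith) (by linarith)))

lemma ramp_lt_ramp (hpq : p < q) (hxy : x < y) (hpy : p < y) (hxq : x < q) :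
    ramp p q x < ramp p q y := by
  have hX : (x - p) / (q - p) < 1 := (div_lt_one (sub_pos.2 hpq)).2 (by linarith)
  have hY : 0 < (y - p) / (q - p) := div_pos (by linarith) (sub_pos.2 hpq)
  have hXY : (x - p) / (q - p) < (y - p) / (q - p) :=
    div_lt_div_of_pos_right (by linarith) (sub_pos.2 hpq)
  rw [ramp, ramp, min_eq_right hX.le, max_eq_right (le_min zero_le_one hY.le)]
  exact max_lt (lt_min one_pos hY) (lt_min hX hXY)

/-- The piecewise linear interpolation of the nodes `(a n, v n)`, written as a sum of ramps. -/
def interpolant (a v : ℕ → ℝ) (x : ℝ) : ℝ :=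
  ∑' n, (v n - v (n + 1)) * ramp (a (n + 1)) (a n) x

variable {a v : ℕ → ℝ}

lemma summable_interpolant (hv : Antitone v) (hv0 : Tendsto v atTop (𝓝 0)) (x : ℝ) :
    Summable fun n => (v n - v (n + 1)) * ramp (a (n + 1)) (a n) x :=
  (hasSum_sub_succ hv hv0).summable.of_nonneg_of_le
    (fun n => mul_nonneg (sub_nonneg.2 (hv n.le_succ)) ramp_nonneg)
    (fun n => mul_le_of_le_one_right (sub_nonneg.2 (hv n.le_succ)) ramp_le_one)

lemma continuous_interpolant (hv : Antitone v) (hv0 : Tendsto v atTop (𝓝 0)) :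
    Continuous (interpolant a v) :=
  continuous_tsum (fun n => continuous_const.mul (continuous_ramp _ _))
    (hasSum_sub_succ hv hv0).summable fun n x => by
      rw [Real.norm_eq_abs, abs_of_nonneg (mul_nonneg (sub_nonneg.2 (hv n.le_succ)) ramp_nonneg)]
      exact mul_le_of_le_one_right (sub_nonneg.2 (hv n.le_succ)) ramp_le_one

lemma interpolant_apply (ha : StrictAnti a) (hv : Antitone v) (hv0 : Tendsto v atTop (𝓝 0))
    (k : ℕ) : interpolant a v (a k) = v k := by
  have hshift : HasSum (fun n => v (n + k) - v (n + k + 1)) (v k) := by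
    simpa [add_right_comm] using hasSum_sub_succ (v := fun n => v (n + k))
      (fun m n h => hv (by omega)) (hv0.comp (tendsto_add_atTop_nat k))
  rw [interpolant, ← (summable_interpolant hv hv0 _).sum_add_tsum_nat_add k,
    Finset.sum_eq_zero fun n hn => ?_, zero_add]
  · refine (hshift.congr_fun ?_).tsum_eq
    intro n
    rw [ramp_eq_one (ha (n + k).lt_succ_self) (ha.antitone (Nat.le_add_left k n)), mul_one]
  · rw [ramp_eq_zero (ha n.lt_succ_self) (ha.antitone (Finset.mem_range.1 hn)), mul_zero]

lemma interpolant_zero (ha : StrictAnti a) (ha0 : Tendsto a atTop (𝓝 0)) (hv : Antitone v)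
    (hv0 : Tendsto v atTop (𝓝 0)) : interpolant a v 0 = 0 :=
  tendsto_nhds_unique (((continuous_interpolant hv hv0).tendsto 0).comp ha0) <| by
    simpa [Function.comp_def, interpolant_apply ha hv hv0] using hv0

lemma strictMonoOn_interpolant (ha : StrictAnti a) (ha0 : Tendsto a atTop (𝓝 0))
    (hv : StrictAnti v) (hv0 : Tendsto v atTop (𝓝 0)) :
    StrictMonoOn (interpolant a v) (Icc 0 (a 0)) := by
  intro x hx y hy hxy
  obtain ⟨n, hny, hyn⟩ := exists_apply_succ_lt_and_le
    (ha0.eventually (gt_mem_nhds (hx.1.trans_lt hxy))).exists hy.2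
  refine Summable.tsum_lt_tsum (i := n) (fun m => ?_) ?_ (summable_interpolant hv.antitone hv0 x)
    (summable_interpolant hv.antitone hv0 y)
  · exact mul_le_mul_of_nonneg_left (monotone_ramp (ha m.lt_succ_self).le hxy.le)
      (sub_nonneg.2 (hv.antitone m.le_succ))
  · exact mul_lt_mul_of_pos_left (ramp_lt_ramp (ha n.lt_succ_self) hxy hny (hxy.trans_le hyn))
      (sub_pos.2 (hv n.lt_succ_self))

end Interpolation

section Oscillation

def OscillatesBetween (lo hi G : ℝ → ℝ) (l : Filter ℝ) : Prop :=
  (∃ᶠ t in l, hi t ≤ G t) ∧ ∃ᶠ t in l, G t ≤ lo t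

variable {lo hi F G : ℝ → ℝ} {l : Filter ℝ}

lemma OscillatesBetween.congr (h : OscillatesBetween lo hi F l) (hFG : F =ᶠ[l] G) :
    OscillatesBetween lo hi G l :=
  ⟨h.1.mp (hFG.mono fun _ ht h => ht ▸ h), h.2.mp (hFG.mono fun _ ht h => ht ▸ h)⟩

lemma OscillatesBetween.frequently_eq {ι : Type*} {p : ι → Prop} {s : ι → Set ℝ}
    (h : OscillatesBetween lo hi G l) (hl : l.HasBasis p s) (hs : ∀ i, p i → IsPreconnected (s i))
    {f : ℝ → ℝ} (hG : Continuous G) (hf : Continuous f) (hlo : ∀ t, lo t ≤ f t)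
    (hhi : ∀ t, f t ≤ hi t) : ∃ᶠ t in l, G t = f t := by
  obtain ⟨habove, hbelow⟩ := h
  rw [hl.frequently_iff] at habove hbelow ⊢
  intro i hi
  obtain ⟨u, hu, hGu⟩ := habove i hi
  obtain ⟨w, hw, hGw⟩ := hbelow i hi
  exact (hs i hi).intermediate_value₂ hw hu hG.continuousOn hf.continuousOn
    (hGw.trans (hlo w)) ((hhi u).trans hGu)

lemma tendsto_one_sub_nhdsGT_zero : Tendsto (fun t : ℝ => 1 - t) (𝓝[>] 0) (𝓝[<] 1) :=
  tendsto_nhdsWithin_of_tendsto_nhds_of_eventually_within _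
    (((continuous_const.sub continuous_id).tendsto' (0 : ℝ) 1 (sub_zero 1)).mono_left
      nhdsWithin_le_nhds)
    (eventually_nhdsWithin_of_forall fun _ ht => sub_lt_self (1 : ℝ) ht)

lemma OscillatesBetween.reflect
    (h : OscillatesBetween (fun t => 1 - hi (1 - t)) (fun t => 1 - lo (1 - t)) F (𝓝[>] 0)) :
    OscillatesBetween lo hi (fun t => 1 - F (1 - t)) (𝓝[<] 1) :=
  ⟨tendsto_one_sub_nhdsGT_zero.frequently <| h.2.mono fun t ht => by
      simp only [sub_sub_cancel]
      linarith,
    tendsto_one_sub_nhdsGT_zero.frequently <| h.1.mono fun t ht => by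
      simp only [sub_sub_cancel]
      linarith⟩

lemma tendsto_zero_of_le_half {a : ℕ → ℝ} (h0 : ∀ n, 0 ≤ a n) (h : ∀ n, a (n + 1) ≤ a n / 2) :
    Tendsto a atTop (𝓝 0) := by
  have hle : ∀ n, a n ≤ a 0 * (1 / 2) ^ n := by
    intro n
    induction n with
    | zero => simp
    | succ n ih => calc
        a (n + 1) ≤ a n / 2 := h n
        _ ≤ a 0 * (1 / 2) ^ n / 2 := by linarith
        _ = a 0 * (1 / 2) ^ (n + 1) := by ring
  refine squeeze_zero h0 hle ?_
  simpa using (tendsto_pow_atTop_nhds_zero_of_lt_one (r := (1 / 2 : ℝ)) (by norm_num)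
    (by norm_num)).const_mul (a 0)

lemma exists_seq_hi_succ_lt_min_lo (hhi : ContinuousAt hi 0) (hhi0 : hi 0 = 0)
    (hlo : ∀ t, 0 < t → 0 < lo t) {x y : ℝ} (hx : 0 < x) (hy : 0 < y) :
    ∃ a : ℕ → ℝ, a 0 = x ∧ (∀ n, 0 < a n) ∧ (∀ n, a (n + 1) ≤ a n / 2) ∧
      ∀ n, hi (a (n + 1)) < min (lo (a n)) y := by
  have hstep : ∀ t : Ioi (0 : ℝ), ∃ s : Ioi (0 : ℝ), (s : ℝ) ≤ t / 2 ∧ hi s < min (lo t) y := by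
    rintro ⟨t, ht⟩
    have hsmall : ∀ᶠ s in 𝓝[>] 0, hi s < min (lo t) y :=
      nhdsWithin_le_nhds (hhi.eventually (gt_mem_nhds (by rw [hhi0]; exact lt_min (hlo t ht) hy)))
    obtain ⟨s, hs, hst⟩ := (hsmall.and (Ioo_mem_nhdsGT (half_pos ht))).exists
    exact ⟨⟨s, hst.1⟩, hst.2.le, hs⟩
  choose ρ hρ using hstep
  refine ⟨fun n => (ρ^[n] ⟨x, hx⟩ : ℝ), rfl, fun n => (ρ^[n] _).2, fun n => ?_, fun n => ?_⟩ <;>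
    dsimp only <;> rw [Function.iterate_succ_apply']
  exacts [(hρ _).1, (hρ _).2]

lemma exists_nodes (hle : ∀ t, lo t ≤ hi t) (hhi : ContinuousAt hi 0) (hhi0 : hi 0 = 0)
    (hlo : ∀ t, 0 < t → 0 < lo t) {x y : ℝ} (hx : 0 < x) (hy : 0 < y) :
    ∃ a v : ℕ → ℝ, StrictAnti a ∧ StrictAnti v ∧ Tendsto a atTop (𝓝[>] 0) ∧
      Tendsto v atTop (𝓝 0) ∧ a 0 = x ∧ v 0 = y ∧
      (∀ n, v (2 * n + 1) = hi (a (2 * n + 1))) ∧ ∀ n, v (2 * n + 2) = lo (a (2 * n + 2)) := by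
  obtain ⟨a, ha0, hapos, hahalf, hahi⟩ := exists_seq_hi_succ_lt_min_lo hhi hhi0 hlo hx hy
  set v : ℕ → ℝ := fun n => if n = 0 then y else if Even n then lo (a n) else hi (a n) with hv_def
  have hv_odd : ∀ n, Odd n → v n = hi (a n) := fun n hn => by
    simp [hv_def, Nat.not_even_iff_odd.2 hn, hn.pos.ne']
  have hv_even : ∀ n, Even n → 0 < n → v n = lo (a n) := fun n hn hn0 => by
    simp [hv_def, hn, hn0.ne']
  have hv_le : ∀ n, 0 < n → v n ≤ hi (a n) := fun n hn0 => by
    rcases n.even_or_odd with hn | hn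
    · exact (hv_even n hn hn0).trans_le (hle _)
    · exact (hv_odd n hn).le
  have hv_ge : ∀ n, 0 < n → lo (a n) ≤ v n := fun n hn0 => by
    rcases n.even_or_odd with hn | hn
    · exact (hv_even n hn hn0).ge
    · exact (hle _).trans (hv_odd n hn).ge
  have ha_tendsto : Tendsto a atTop (𝓝 0) :=
    tendsto_zero_of_le_half (fun n => (hapos n).le) hahalf
  refine ⟨a, v, strictAnti_nat_of_succ_lt fun n => (hahalf n).trans_lt (half_lt_self (hapos n)),
    strictAnti_nat_of_succ_lt fun n => ?_, tendsto_nhdsWithin_iff.2 ⟨ha_tendsto, .of_forall hapos⟩,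
    ?_, ha0, rfl, fun n => hv_odd _ (odd_two_mul_add_one n),
    fun n => hv_even _ ⟨n + 1, by ring⟩ (2 * n + 1).succ_pos⟩
  · rcases n.eq_zero_or_pos with rfl | hn
    · exact (hv_le 1 one_pos).trans_lt ((hahi 0).trans_le (min_le_right _ _))
    · exact (hv_le _ n.succ_pos).trans_lt
        (((hahi n).trans_le (min_le_left _ _)).trans_le (hv_ge n hn))
  · refine tendsto_of_tendsto_of_tendsto_of_le_of_le' tendsto_const_nhds
      (hhi0 ▸ hhi.tendsto.comp ha_tendsto) ?_ ?_ <;>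
      filter_upwards [eventually_gt_atTop 0] with n hn
    · exact (hlo _ (hapos n)).le.trans (hv_ge n hn)
    · exact hv_le n hn

lemma exists_oscillatesBetween_nhdsGT_zero (hle : ∀ t, lo t ≤ hi t) (hhi : ContinuousAt hi 0)
    (hhi0 : hi 0 = 0) (hlo : ∀ t, 0 < t → 0 < lo t) {x y : ℝ} (hx : 0 < x) (hy : 0 < y) :
    ∃ F : ℝ → ℝ, Continuous F ∧ StrictMonoOn F (Icc 0 x) ∧ F 0 = 0 ∧ F x = y ∧
      OscillatesBetween lo hi F (𝓝[>] 0) := by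
  obtain ⟨a, v, ha, hv, ha_tendsto, hv_tendsto, ha0, hv0, hv_odd, hv_even⟩ :=
    exists_nodes hle hhi hhi0 hlo hx hy
  have ha_tendsto₀ : Tendsto a atTop (𝓝 0) := ha_tendsto.mono_right nhdsWithin_le_nhds
  have hnode := interpolant_apply ha hv.antitone hv_tendsto
  refine ⟨interpolant a v, continuous_interpolant hv.antitone hv_tendsto,
    ha0 ▸ strictMonoOn_interpolant ha ha_tendsto₀ hv hv_tendsto,
    interpolant_zero ha ha_tendsto₀ hv.antitone hv_tendsto, ha0 ▸ hv0 ▸ hnode 0, ?_, ?_⟩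
  · refine ha_tendsto.frequently (frequently_atTop.2 fun n => ⟨2 * n + 1, by omega, ?_⟩)
    rw [hnode, hv_odd]
  · refine ha_tendsto.frequently (frequently_atTop.2 fun n => ⟨2 * n + 2, by omega, ?_⟩)
    rw [hnode, hv_even]

lemma exists_oscillatesBetween_unitInterval {lo hi : ℝ → ℝ} (hle : ∀ t, lo t ≤ hi t)
    (hlo : ContinuousAt lo 1) (hhi : ContinuousAt hi 0) (hlo1 : lo 1 = 1) (hhi0 : hi 0 = 0)
    (hlo_pos : ∀ t, 0 < t → 0 < lo t) (hhi_lt : ∀ t, t < 1 → hi t < 1) {x y : ℝ}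
    (hx : x ∈ Ioo 0 1) (hy : y ∈ Ioo 0 1) :
    ∃ G : ℝ → ℝ, Continuous G ∧ StrictMonoOn G (Icc 0 1) ∧ G 0 = 0 ∧ G 1 = 1 ∧ G x = y ∧
      OscillatesBetween lo hi G (𝓝[>] 0) ∧ OscillatesBetween lo hi G (𝓝[<] 1) := by
  obtain ⟨F₀, hF₀c, hF₀m, hF₀0, hF₀x, hF₀osc⟩ :=
    exists_oscillatesBetween_nhdsGT_zero hle hhi hhi0 hlo_pos hx.1 hy.1
  obtain ⟨F₁, hF₁c, hF₁m, hF₁0, hF₁x, hF₁osc⟩ :=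
    exists_oscillatesBetween_nhdsGT_zero (lo := fun t => 1 - hi (1 - t))
      (hi := fun t => 1 - lo (1 - t)) (fun t => by linarith [hle (1 - t)])
      (continuousAt_const.sub (hlo.comp_of_eq (continuousAt_const.sub continuousAt_id)
        (sub_zero 1)))
      (by simp [hlo1]) (fun t ht => sub_pos.2 (hhi_lt _ (by linarith))) (sub_pos.2 hx.2)
      (sub_pos.2 hy.2)
  set G : ℝ → ℝ := fun t => if t ≤ x then F₀ t else 1 - F₁ (1 - t) with hG
  have hG_right : ∀ t, x ≤ t → G t = 1 - F₁ (1 - t) := by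
    intro t ht
    rcases ht.eq_or_lt with rfl | ht
    · simp [hG, hF₀x, hF₁x]
    · exact if_neg ht.not_ge
  have hF₁m' : StrictMonoOn (fun t => 1 - F₁ (1 - t)) (Icc x 1) := fun s hs t ht hst => by
    have := hF₁m ⟨sub_nonneg.2 ht.2, by linarith [ht.1]⟩ ⟨sub_nonneg.2 hs.2, by linarith [hs.1]⟩
      (by linarith : 1 - t < 1 - s)
    linarith
  refine ⟨G, ?_, ?_, by simp [hG, hx.1.le, hF₀0],
    by rw [hG_right 1 hx.2.le, sub_self, hF₁0, sub_zero], by simp [hG, hF₀x],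
    hF₀osc.congr ?_, hF₁osc.reflect.congr ?_⟩
  · exact Continuous.if_le hF₀c (continuous_const.sub (hF₁c.comp (continuous_const.sub
      continuous_id))) continuous_id continuous_const fun t ht => by simp [ht, hF₀x, hF₁x]
  · rw [← Icc_union_Icc_eq_Icc hx.1.le hx.2.le]
    exact (hF₀m.congr fun t ht => (if_pos ht.2).symm).union
      (hF₁m'.congr fun t ht => (hG_right t ht.1).symm) (isGreatest_Icc hx.1.le)
      (isLeast_Icc hx.2.le)
  · filter_upwards [Ioo_mem_nhdsGT hx.1] with t ht using (if_pos ht.2.le).symm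
  · filter_upwards [Ioo_mem_nhdsLT hx.2] with t ht using (hG_right t ht.1.le).symm

end Oscillation

section UnitInterval

lemma exists_homeoPlusI_eq {G : ℝ → ℝ} (hc : ContinuousOn G (Icc 0 1))
    (hm : StrictMonoOn G (Icc 0 1)) (h0 : G 0 = 0) (h1 : G 1 = 1) :
    ∃ g : HomeoPlusI, ∀ x : I, ((g : I ≃ₜ I) x : ℝ) = G x := by
  have hmaps : ∀ x : I, G x ∈ I := fun x =>
    ⟨h0 ▸ hm.monotoneOn (left_mem_Icc.2 zero_le_one) x.2 x.2.1,
      h1 ▸ hm.monotoneOn x.2 (right_mem_Icc.2 zero_le_one) x.2.2⟩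
  let T : I → I := fun x => ⟨G x, hmaps x⟩
  have hT : StrictMono T := fun x y h => hm x.2 y.2 h
  have hsurj : Function.Surjective T := fun y => by
    obtain ⟨x, hx, hGx⟩ := intermediate_value_Icc zero_le_one hc (by rw [h0, h1]; exact y.2)
    exact ⟨⟨x, hx⟩, Subtype.ext hGx⟩
  let e := hT.orderIsoOfSurjective T hsurj
  exact ⟨⟨e.toHomeomorph, e.monotone⟩, fun x => rfl⟩

lemma frequently_projIcc_mem_fixSet {f g : HomeoPlusI} {G : ℝ → ℝ}
    (hg : ∀ x : I, ((g : I ≃ₜ I) x : ℝ) = G x) {l : Filter ℝ} (hl : Icc 0 1 ∈ l)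
    (h : ∃ᶠ t in l, G t = realExtend f t) :
    ∃ᶠ t in l, projIcc 0 1 zero_le_one t ∈ fixSet (g⁻¹ * f) := by
  refine h.mp (mem_of_superset hl fun t ht hGt => ?_)
  rw [mem_fixSet_inv_mul_iff]
  ext
  rw [← realExtend_apply, ← hGt, projIcc_of_mem _ ht, hg]

lemma accPt_zero_of_frequently {S : Set I}
    (h : ∃ᶠ t in 𝓝[>] (0 : ℝ), projIcc 0 1 zero_le_one t ∈ S) : AccPt 0 (𝓟 S) := by
  rw [accPt_iff_frequently_nhdsNE]
  refine (tendsto_nhdsWithin_of_tendsto_nhds_of_eventually_within _ ?_ ?_).frequently h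
  · exact ((continuous_projIcc.tendsto' 0 0 (projIcc_left _)).mono_left nhdsWithin_le_nhds)
  · exact eventually_nhdsWithin_of_forall fun t ht =>
      (projIcc_eq_left zero_lt_one).not.2 (not_le.2 ht)

lemma accPt_one_of_frequently {S : Set I}
    (h : ∃ᶠ t in 𝓝[<] (1 : ℝ), projIcc 0 1 zero_le_one t ∈ S) : AccPt 1 (𝓟 S) := by
  rw [accPt_iff_frequently_nhdsNE]
  refine (tendsto_nhdsWithin_of_tendsto_nhds_of_eventually_within _ ?_ ?_).frequently h
  · exact ((continuous_projIcc.tendsto' 1 1 (projIcc_right _)).mono_left nhdsWithin_le_nhds)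
  · exact eventually_nhdsWithin_of_forall fun t ht =>
      (projIcc_eq_right zero_lt_one).not.2 (not_le.2 ht)

end UnitInterval

/-- Given a compact `K ⊆ Homeo⁺([0,1])` and `x₀, y₀ ∈ (0,1)`, there is `g ∈ Homeo⁺([0,1])` with
`g x₀ = y₀` such that `0` and `1` are accumulation points of `fix (g⁻¹ ∘ f)` for all `f ∈ K`. -/
theorem stmt_8 (K : Set HomeoPlusI) (hK : IsCompact K) (x₀ y₀ : I)
    (hx₀ : (x₀ : ℝ) ∈ Set.Ioo (0 : ℝ) 1) (hy₀ : (y₀ : ℝ) ∈ Set.Ioo (0 : ℝ) 1) :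
    ∃ g : HomeoPlusI, (g : I ≃ₜ I) x₀ = y₀ ∧
      ∀ f ∈ K, AccPt (0 : I) (Filter.principal (fixSet (g⁻¹ * f))) ∧
        AccPt (1 : I) (Filter.principal (fixSet (g⁻¹ * f))) := by
  have hK' : IsCompact (insert 1 K) := hK.insert 1
  have hne : (insert 1 K).Nonempty := insert_nonempty 1 K
  obtain ⟨G, hGc, hGm, hG0, hG1, hGx, hosc₀, hosc₁⟩ :=
    exists_oscillatesBetween_unitInterval (lowerEnvelope_le_upperEnvelope hne)
      (continuous_lowerEnvelope hK').continuousAt (continuous_upperEnvelope hK').continuousAt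
      (lowerEnvelope_one hne) (upperEnvelope_zero hne) (fun _ => lowerEnvelope_pos hK' hne)
      (fun _ => upperEnvelope_lt_one hK' hne) hx₀ hy₀
  obtain ⟨g, hg⟩ := exists_homeoPlusI_eq hGc.continuousOn hGm hG0 hG1
  refine ⟨g, Subtype.ext ((hg x₀).trans hGx), fun f hf => ?_⟩
  have hlo := lowerEnvelope_le_realExtend (mem_insert_of_mem 1 hf)
  have hhi := realExtend_le_upperEnvelope (mem_insert_of_mem 1 hf)
  exact ⟨accPt_zero_of_frequently <| frequently_projIcc_mem_fixSet hg
      (Icc_mem_nhdsGT zero_lt_one) <| hosc₀.frequently_eq (nhdsGT_basis 0)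
        (fun _ _ => isPreconnected_Ioo) hGc (continuous_realExtend f) hlo hhi,
    accPt_one_of_frequently <| frequently_projIcc_mem_fixSet hg
      (Icc_mem_nhdsLT zero_lt_one) <| hosc₁.frequently_eq (nhdsLT_basis 1)
        (fun _ _ => isPreconnected_Ioo) hGc (continuous_realExtend f) hlo hhi⟩

end
end

section
/- Let p, q be relatively prime integers with 0 ≤ p < q and let n be a positive integer. There exists f ∈ Homeo⁺(S¹) with rotation number τ(f) = p/q (mod 1) having exactly n periodic points, all of which are crossing, if and only if q divides n and n/q is even. -/
open MeasureTheory Set Function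

noncomputable section

/-- `F : ℝ ≃ₜ ℝ` is a lift of the circle homeomorphism `f` if it is (strictly) increasing,
commutes with the unit translation and projects to `f` under the projection `ℝ → ℝ/ℤ`. -/
def IsLift (F : ℝ ≃ₜ ℝ) (f : UnitAddCircle ≃ₜ UnitAddCircle) : Prop :=
  StrictMono F ∧ (∀ x : ℝ, F (x + 1) = F x + 1) ∧
    ∀ x : ℝ, f (x : UnitAddCircle) = ((F x : ℝ) : UnitAddCircle)

/-- The Polish group `Homeo⁺(S¹)` of orientation-preserving homeomorphisms of the circle
`S¹ = ℝ/ℤ`, i.e. those homeomorphisms admitting an increasing lift. -/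
def HomeoPlusCircle : Subgroup (UnitAddCircle ≃ₜ UnitAddCircle) where
  carrier := {f | ∃ F : ℝ ≃ₜ ℝ, IsLift F f}
  one_mem' := ⟨Homeomorph.refl ℝ, strictMono_id, fun _ => rfl, fun _ => rfl⟩
  mul_mem' := by
    rintro a b ⟨A, hAm, hAp, hAl⟩ ⟨B, hBm, hBp, hBl⟩
    refine ⟨B.trans A, hAm.comp hBm, fun x => ?_, fun x => ?_⟩
    · show A (B (x + 1)) = A (B x) + 1
      rw [hBp, hAp]
    · show a (b (x : UnitAddCircle)) = ((A (B x) : ℝ) : UnitAddCircle)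
      rw [hBl, hAl]
  inv_mem' := by
    rintro f ⟨F, hFm, hFp, hFl⟩
    refine ⟨F.symm, fun a b hab => ?_, fun x => ?_, fun x => ?_⟩
    · have h : F (F.symm a) < F (F.symm b) := by
        rw [F.apply_symm_apply, F.apply_symm_apply]; exact hab
      exact hFm.lt_iff_lt.mp h
    · apply F.injective
      rw [F.apply_symm_apply, hFp, F.apply_symm_apply]
    · show f.symm (x : UnitAddCircle) = ((F.symm x : ℝ) : UnitAddCircle)
      have h : f ((F.symm x : ℝ) : UnitAddCircle) = ((x : ℝ) : UnitAddCircle) := by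
        rw [hFl, F.apply_symm_apply]
      rw [← h, f.symm_apply_apply]

instance : MeasurableSpace HomeoPlusCircle := borel _
instance : BorelSpace HomeoPlusCircle := ⟨rfl⟩

/-- The degree one lift associated to an increasing lift of a circle homeomorphism. -/
def toCircleDeg1Lift (F : ℝ ≃ₜ ℝ) (hm : Monotone ⇑F) (hp : ∀ x : ℝ, F (x + 1) = F x + 1) :
    CircleDeg1Lift :=
  ⟨⟨⇑F, hm⟩, hp⟩

/-- `f` has rotation number `α ∈ ℝ/ℤ`: some (equivalently, any) increasing lift of `f` has
translation number representing `α` modulo `1`. -/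
def HasRotationNumber (f : UnitAddCircle ≃ₜ UnitAddCircle) (α : UnitAddCircle) : Prop :=
  ∃ F : ℝ ≃ₜ ℝ, ∃ hF : IsLift F f,
    (((toCircleDeg1Lift F hF.1.monotone hF.2.1).translationNumber : ℝ) : UnitAddCircle) = α

/-- `x` is a crossing fixed point of the circle homeomorphism `g`: near a representative `x'` of
`x` (with `G x' = x' + k` for a lift `G`), the lift takes values both below and above the
translated diagonal `y ↦ y + k` in every neighbourhood of `x'`. -/
def IsCrossingFixedPt (g : UnitAddCircle ≃ₜ UnitAddCircle) (x : UnitAddCircle) : Prop :=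
  ∀ G : ℝ ≃ₜ ℝ, IsLift G g → ∀ x' : ℝ, (x' : UnitAddCircle) = x → ∀ k : ℤ, G x' = x' + k →
    ∀ ε > (0 : ℝ),
      (∃ y₁ ∈ Set.Ioo (x' - ε) (x' + ε), G y₁ < y₁ + k) ∧
      (∃ y₂ ∈ Set.Ioo (x' - ε) (x' + ε), y₂ + k < G y₂)

/-- A periodic point `x` of `f` of least period `n` is crossing if it is a crossing fixed
point of `fⁿ`. -/
def IsCrossingPeriodicPt (f : UnitAddCircle ≃ₜ UnitAddCircle) (x : UnitAddCircle) : Prop :=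
  IsCrossingFixedPt (f ^ Function.minimalPeriod (⇑f) x) x

/-!
Lift `f` to `F` with translation number `c / q`, `c` coprime to `q`. Every periodic point of
`f` has period `q` and its lifts are the zeros of the continuous `1`-periodic function
`ψ = F^q - c - id`; the crossing condition says that `ψ` changes sign at each zero. Enumerating
the zeros increasingly as `z : ℤ → ℝ`, with `z (i + n) = z i + 1`, the sign of `ψ` alternates
from gap to gap, so an increasing map preserving the zeros and the sign of `ψ` shifts the indices
by an even amount. The translation by `1` shifts them by `n`, and `F` by some `d` with
`q d = n c`. Hence `n` and `d` are even and `q ∣ n`; if `n / q` were odd, `c` would be even, so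
`q` odd and `n` odd. Conversely, for `n = q k` with `k` even, the periodic points of the circle
map lifted by `x ↦ x + sin (π n x) / (2 π n) + p / q` are the `n` points `j / n`, all crossing.
-/

open Filter Topology Real

theorem Homeomorph.coe_pow_eq_iterate {X : Type*} [TopologicalSpace X] (f : X ≃ₜ X) (k : ℕ) :
    ⇑(f ^ k) = (⇑f)^[k] := by
  induction k with
  | zero => rfl
  | succ k ih => rw [pow_succ, Function.iterate_succ, ← ih]; rfl

theorem UnitAddCircle.coe_eq_coe_iff_exists_int {x y : ℝ} :
    (x : UnitAddCircle) = y ↔ ∃ k : ℤ, y = x + k := by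
  rw [eq_comm, ← sub_eq_zero, ← AddCircle.coe_sub, AddCircle.coe_eq_zero_iff]
  refine exists_congr fun k => ?_
  rw [zsmul_one]
  constructor <;> intro h <;> linarith

theorem Real.frequently_and_frequently_nhds_iff {p r : ℝ → Prop} {x : ℝ} :
    ((∃ᶠ y in 𝓝 x, p y) ∧ ∃ᶠ y in 𝓝 x, r y) ↔
      ∀ ε > 0, (∃ y ∈ Ioo (x - ε) (x + ε), p y) ∧
        ∃ y ∈ Ioo (x - ε) (x + ε), r y := by
  simp only [Metric.nhds_basis_ball.frequently_iff, Real.ball_eq_Ioo]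
  exact ⟨fun h ε hε => ⟨h.1 ε hε, h.2 ε hε⟩,
    fun h => ⟨fun ε hε => (h ε hε).1, fun ε hε => (h ε hε).2⟩⟩

section Iterate

variable {α : Type*} [LinearOrder α] {f : α → α} {n : ℕ}

theorem StrictMono.iterate_lt_self_iff (hf : StrictMono f) (hn : 0 < n) {x : α} :
    f^[n] x < x ↔ f x < x := by
  simpa using Function.Commute.id_right.iterate_pos_lt_iff_map_lt' hf monotone_id hn

theorem StrictMono.lt_iterate_self_iff (hf : StrictMono f) (hn : 0 < n) {x : α} :
    x < f^[n] x ↔ x < f x := by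
  simpa using Function.Commute.id_left.iterate_pos_lt_iff_map_lt monotone_id hf hn

theorem StrictMono.iterate_eq_self_iff (hf : StrictMono f) (hn : 0 < n) {x : α} :
    f^[n] x = x ↔ f x = x := by
  simpa using Function.Commute.id_right.iterate_pos_eq_iff_map_eq hf.monotone strictMono_id hn

end Iterate

section Lift

variable {F G : ℝ ≃ₜ ℝ} {f g : UnitAddCircle ≃ₜ UnitAddCircle}

abbrev IsLift.circleDeg1Lift (hF : IsLift F f) : CircleDeg1Lift :=
  toCircleDeg1Lift F hF.1.monotone hF.2.1

theorem IsLift.coe_pow (hF : IsLift F f) (m : ℕ) : ⇑(F ^ m) = ⇑(hF.circleDeg1Lift ^ m) := by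
  rw [Homeomorph.coe_pow_eq_iterate, CircleDeg1Lift.coe_pow]; rfl

theorem IsLift.iterate_coe (hF : IsLift F f) (m : ℕ) (x : ℝ) :
    (⇑f)^[m] x = ((hF.circleDeg1Lift ^ m) x : UnitAddCircle) := by
  rw [CircleDeg1Lift.coe_pow]
  induction m generalizing x with
  | zero => rfl
  | succ m ih => rw [Function.iterate_succ_apply, Function.iterate_succ_apply, hF.2.2, ih]; rfl

theorem IsLift.pow (hF : IsLift F f) (m : ℕ) : IsLift (F ^ m) (f ^ m) := by
  refine ⟨?_, fun x => ?_, fun x => ?_⟩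
  · rw [Homeomorph.coe_pow_eq_iterate]; exact hF.1.iterate m
  · rw [hF.coe_pow]; exact (hF.circleDeg1Lift ^ m).map_add_one x
  · rw [hF.coe_pow, Homeomorph.coe_pow_eq_iterate, hF.iterate_coe]

theorem IsLift.exists_eq_add_int (hF : IsLift F f) (hG : IsLift G f) :
    ∃ m : ℤ, ∀ x, G x = F x + m := by
  have hmem : ∀ x, G x - F x ∈ AddSubgroup.zmultiples (1 : ℝ) := fun x => by
    obtain ⟨k, hk⟩ :=
      UnitAddCircle.coe_eq_coe_iff_exists_int.1 ((hF.2.2 x).symm.trans (hG.2.2 x))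
    exact AddSubgroup.mem_zmultiples_iff.2 ⟨k, by rw [zsmul_one, hk, add_sub_cancel_left]⟩
  have hconst : ∀ x, G x - F x = G 0 - F 0 := fun x =>
    isPreconnected_univ.constant_of_mapsTo
      (isDiscrete_iff_discreteTopology.2
        (inferInstanceAs (DiscreteTopology (AddSubgroup.zmultiples (1 : ℝ)))))
      (G.continuous.sub F.continuous).continuousOn (fun y _ => hmem y) (mem_univ x) (mem_univ 0)
  obtain ⟨m, hm⟩ := AddSubgroup.mem_zmultiples_iff.1 (hmem 0)
  exact ⟨m, fun x => by rw [zsmul_one] at hm; linarith [hconst x]⟩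

theorem IsLift.isCrossingFixedPt_iff (hG : IsLift G g) {x : UnitAddCircle} :
    IsCrossingFixedPt g x ↔
      ∀ x' : ℝ, (x' : UnitAddCircle) = x → ∀ k : ℤ, G x' = x' + k →
        (∃ᶠ y in 𝓝 x', G y < y + k) ∧ ∃ᶠ y in 𝓝 x', y + k < G y := by
  simp only [IsCrossingFixedPt, ← Real.frequently_and_frequently_nhds_iff]
  refine ⟨fun h x' hx' k hk => h G hG x' hx' k hk, fun h H hH x' hx' k hk => ?_⟩
  obtain ⟨m, hm⟩ := hG.exists_eq_add_int hH
  have hGk : G x' = x' + ↑(k - m) := by push_cast; linarith [hm x']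
  simp only [hm]
  obtain ⟨hneg, hpos⟩ := h x' hx' (k - m) hGk
  exact ⟨hneg.mono fun y hy => by push_cast at hy; linarith,
    hpos.mono fun y hy => by push_cast at hy; linarith⟩

end Lift

section RationalRotation

variable {q : ℕ} {c : ℤ}

theorem CircleDeg1Lift.dvd_and_pow_apply_eq_add (L : CircleDeg1Lift) (hL : StrictMono L)
    (hq : 0 < q) (hτ : L.translationNumber = c / q) (hcq : IsCoprime c q) {m : ℕ} (hm : 0 < m)
    {x : ℝ} {k : ℤ} (h : (L ^ m) x = x + k) : q ∣ m ∧ (L ^ q) x = x + c := by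
  have hq' : (q : ℝ) ≠ 0 := by positivity
  have hmk : (m : ℝ) * (c / q) = k := by
    rw [← hτ, ← CircleDeg1Lift.translationNumber_pow]
    exact CircleDeg1Lift.translationNumber_of_eq_add_int _ h
  have hmk' : (m : ℤ) * c = q * k := by
    field_simp at hmk; exact_mod_cast hmk
  obtain ⟨s, rfl⟩ : q ∣ m :=
    Int.natCast_dvd_natCast.1 (hcq.symm.dvd_of_dvd_mul_right ⟨k, hmk'⟩)
  have hk : k = s * c := by
    apply mul_left_cancel₀ (show (q : ℤ) ≠ 0 by positivity)
    rw [← hmk']; push_cast; ring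
  refine ⟨dvd_mul_right q s, ?_⟩
  set G : ℝ → ℝ := fun y => (L ^ q) y - c with hG
  have hGmono : StrictMono G := fun a b hab => by
    simp only [hG, CircleDeg1Lift.coe_pow, sub_lt_sub_iff_right]; exact hL.iterate q hab
  have hiter : ∀ j : ℕ, G^[j] x = (L ^ (q * j)) x - ((j * c : ℤ) : ℝ) := by
    intro j
    induction j with
    | zero => simp
    | succ j ih =>
      rw [Function.iterate_succ_apply', ih, hG]
      dsimp only
      rw [CircleDeg1Lift.map_sub_int,
        show q * (j + 1) = q + q * j by ring, pow_add, CircleDeg1Lift.mul_apply]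
      push_cast; ring
  have hfix : G^[s] x = x := by rw [hiter, h, hk]; push_cast; ring
  have := (hGmono.iterate_eq_self_iff (Nat.pos_of_mul_pos_left hm)).1 hfix
  simp only [hG] at this; linarith

end RationalRotation

section PeriodicPoints

variable {F : ℝ ≃ₜ ℝ} {f : UnitAddCircle ≃ₜ UnitAddCircle} {q : ℕ} {c : ℤ}

theorem IsLift.isPeriodicPt_coe_iff (hF : IsLift F f) {m : ℕ} {x : ℝ} :
    IsPeriodicPt f m x ↔ ∃ k : ℤ, (hF.circleDeg1Lift ^ m) x = x + k := by
  rw [IsPeriodicPt, IsFixedPt, hF.iterate_coe, eq_comm, UnitAddCircle.coe_eq_coe_iff_exists_int]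

theorem IsLift.mem_periodicPts_coe_iff (hF : IsLift F f) (hq : 0 < q)
    (hτ : hF.circleDeg1Lift.translationNumber = c / q) (hcq : IsCoprime c q) {x : ℝ} :
    (x : UnitAddCircle) ∈ periodicPts f ↔ (hF.circleDeg1Lift ^ q) x = x + c := by
  refine ⟨fun ⟨m, hm, hx⟩ => ?_, fun h => ⟨q, hq, hF.isPeriodicPt_coe_iff.2 ⟨c, h⟩⟩⟩
  obtain ⟨k, hk⟩ := hF.isPeriodicPt_coe_iff.1 hx
  exact (hF.circleDeg1Lift.dvd_and_pow_apply_eq_add hF.1 hq hτ hcq hm hk).2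

theorem IsLift.minimalPeriod_eq (hF : IsLift F f) (hq : 0 < q)
    (hτ : hF.circleDeg1Lift.translationNumber = c / q) (hcq : IsCoprime c q) {x : UnitAddCircle}
    (hx : x ∈ periodicPts f) : minimalPeriod f x = q := by
  obtain ⟨x, rfl⟩ := QuotientAddGroup.mk_surjective x
  obtain ⟨k, hk⟩ := hF.isPeriodicPt_coe_iff.1 (isPeriodicPt_minimalPeriod f x)
  obtain ⟨hdvd, hfix⟩ := hF.circleDeg1Lift.dvd_and_pow_apply_eq_add hF.1 hq hτ hcq
    (minimalPeriod_pos_of_mem_periodicPts hx) hk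
  exact Nat.dvd_antisymm (hF.isPeriodicPt_coe_iff.2 ⟨c, hfix⟩).minimalPeriod_dvd hdvd

theorem IsLift.encard_periodicPts (hF : IsLift F f) (hq : 0 < q)
    (hτ : hF.circleDeg1Lift.translationNumber = c / q) (hcq : IsCoprime c q) :
    (periodicPts f).encard = ({y | (hF.circleDeg1Lift ^ q) y = y + c} ∩ Ico 0 1).encard := by
  have hIco : Ico (0 : ℝ) 1 = Ico 0 (0 + 1) := by rw [zero_add]
  have himage : periodicPts f =
      ((↑) : ℝ → UnitAddCircle) '' ({y | (hF.circleDeg1Lift ^ q) y = y + c} ∩ Ico 0 1) := by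
    ext x
    obtain ⟨x, rfl⟩ := QuotientAddGroup.mk_surjective x
    have hfract : ((Int.fract x : ℝ) : UnitAddCircle) = x :=
      UnitAddCircle.coe_eq_coe_iff_exists_int.2 ⟨⌊x⌋, (Int.fract_add_floor x).symm⟩
    refine ⟨fun hx => ⟨Int.fract x, ⟨?_, Int.fract_nonneg x, Int.fract_lt_one x⟩, hfract⟩,
      ?_⟩
    · exact (hF.mem_periodicPts_coe_iff hq hτ hcq).1 (hfract ▸ hx)
    · rintro ⟨y, ⟨hy, -⟩, hyx⟩
      exact hyx ▸ (hF.mem_periodicPts_coe_iff hq hτ hcq).2 hy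
  rw [himage, InjOn.encard_image]
  intro a ha b hb hab
  rw [hIco] at ha hb
  exact (AddCircle.coe_eq_coe_iff_of_mem_Ico ha.2 hb.2).1 hab

theorem IsLift.forall_isCrossingPeriodicPt_iff (hF : IsLift F f) (hq : 0 < q)
    (hτ : hF.circleDeg1Lift.translationNumber = c / q) (hcq : IsCoprime c q) :
    (∀ x ∈ periodicPts f, IsCrossingPeriodicPt f x) ↔
      ∀ y : ℝ, (hF.circleDeg1Lift ^ q) y = y + c →
        (∃ᶠ w in 𝓝 y, (hF.circleDeg1Lift ^ q) w < w + c) ∧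
          ∃ᶠ w in 𝓝 y, w + c < (hF.circleDeg1Lift ^ q) w := by
  have hiff : ∀ x ∈ periodicPts f, IsCrossingPeriodicPt f x ↔
      ∀ x' : ℝ, (x' : UnitAddCircle) = x → ∀ k : ℤ,
        (hF.circleDeg1Lift ^ q) x' = x' + k →
          (∃ᶠ w in 𝓝 x', (hF.circleDeg1Lift ^ q) w < w + k) ∧
            ∃ᶠ w in 𝓝 x', w + k < (hF.circleDeg1Lift ^ q) w := fun x hx => by
    rw [IsCrossingPeriodicPt, hF.minimalPeriod_eq hq hτ hcq hx, (hF.pow q).isCrossingFixedPt_iff,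
      hF.coe_pow]
  refine ⟨fun h y hy => ?_, fun h x hx => ?_⟩
  · have hmem := (hF.mem_periodicPts_coe_iff hq hτ hcq).2 hy
    exact (hiff _ hmem).1 (h _ hmem) y rfl c hy
  · rw [hiff x hx]
    rintro x' rfl k hk
    have hc := (hF.mem_periodicPts_coe_iff hq hτ hcq).1 hx
    obtain rfl : k = c := by exact_mod_cast add_left_cancel (hk.symm.trans hc)
    exact h x' hc

end PeriodicPoints

theorem HasRotationNumber.exists_translationNumber_eq_div {f : UnitAddCircle ≃ₜ UnitAddCircle}
    {p q : ℕ} (h : HasRotationNumber f ((p / q : ℝ) : UnitAddCircle)) (hpq : Nat.Coprime p q)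
    (hq : 0 < q) : ∃ F : ℝ ≃ₜ ℝ, ∃ hF : IsLift F f, ∃ c : ℤ,
      IsCoprime c q ∧ hF.circleDeg1Lift.translationNumber = c / q := by
  obtain ⟨F, hF, hτ⟩ := h
  obtain ⟨k, hk⟩ := UnitAddCircle.coe_eq_coe_iff_exists_int.1 hτ
  change (p : ℝ) / q = hF.circleDeg1Lift.translationNumber + k at hk
  refine ⟨F, hF, p - q * k, IsCoprime.sub_mul_left_left_iff.2 (Nat.isCoprime_iff_coprime.2 hpq),
    ?_⟩
  field_simp at hk ⊢
  push_cast
  linarith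

section Enumeration

variable {n : ℕ} [NeZero n]

def equivariantExtension (n : ℕ) [NeZero n] (w : Fin n → ℝ) (i : ℤ) : ℝ :=
  w (Int.divModEquiv n i).2 + (Int.divModEquiv n i).1

theorem equivariantExtension_apply (w : Fin n → ℝ) (d : ℤ) (r : Fin n) :
    equivariantExtension n w (d * n + r) = w r + d := by
  rw [equivariantExtension, show d * n + r = (Int.divModEquiv n).symm (d, r) from rfl,
    Equiv.apply_symm_apply]

theorem equivariantExtension_add (w : Fin n → ℝ) (i : ℤ) :
    equivariantExtension n w (i + n) = equivariantExtension n w i + 1 := by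
  obtain ⟨⟨d, r⟩, rfl⟩ := (Int.divModEquiv n).symm.surjective i
  change equivariantExtension n w (d * n + r + n) = equivariantExtension n w (d * n + r) + 1
  rw [show d * n + r + n = (d + 1) * n + r by ring, equivariantExtension_apply,
    equivariantExtension_apply]
  push_cast; ring

theorem strictMono_equivariantExtension {w : Fin n → ℝ} (hw : StrictMono w)
    (hw01 : ∀ r, w r ∈ Ico 0 1) : StrictMono (equivariantExtension n w) := by
  refine strictMono_int_of_lt_succ fun i => ?_
  obtain ⟨⟨d, r⟩, rfl⟩ := (Int.divModEquiv n).symm.surjective i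
  change equivariantExtension n w (d * n + r) < equivariantExtension n w (d * n + r + 1)
  by_cases hr : r.val + 1 < n
  · rw [show d * n + r + 1 = d * n + (⟨r.val + 1, hr⟩ : Fin n) by push_cast; ring,
      equivariantExtension_apply, equivariantExtension_apply]
    gcongr
    exact hw (Fin.mk_lt_mk.2 (Nat.lt_succ_self _))
  · have hn : 0 < n := Nat.pos_of_neZero n
    have hlast : (r : ℤ) = n - 1 := by omega
    rw [show d * n + r + 1 = (d + 1) * n + (⟨0, hn⟩ : Fin n) by push_cast; rw [hlast]; ring,
      equivariantExtension_apply, equivariantExtension_apply]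
    push_cast
    linarith [(hw01 r).2, (hw01 ⟨0, hn⟩).1]

theorem exists_strictMono_enum {Z : Set ℝ} (hZ : ∀ y, y + 1 ∈ Z ↔ y ∈ Z)
    (hcard : (Z ∩ Ico 0 1).encard = n) :
    ∃ z : ℤ → ℝ, StrictMono z ∧ range z = Z ∧ ∀ i, z (i + n) = z i + 1 := by
  have hZint : ∀ (j : ℤ) (y : ℝ), y + j ∈ Z ↔ y ∈ Z := fun j y => by
    have hper : Function.Periodic (· ∈ Z) (1 : ℝ) := fun y => propext (hZ y)
    simpa using Iff.of_eq (hper.int_mul j y)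
  have hfin : (Z ∩ Ico 0 1).Finite := finite_of_encard_eq_coe hcard
  have hcard' : hfin.toFinset.card = n := by
    rw [← ENat.natCast_inj, ← hcard, hfin.encard_eq_coe_toFinset_card]
  set e := hfin.toFinset.orderIsoOfFin hcard'
  have hwZ : ∀ r, (e r : ℝ) ∈ Z ∩ Ico 0 1 := fun r => hfin.mem_toFinset.1 (e r).2
  refine ⟨equivariantExtension n (fun r => e r),
    strictMono_equivariantExtension (fun a b hab => e.strictMono hab) fun r => (hwZ r).2, ?_,
    equivariantExtension_add _⟩
  ext y
  refine ⟨?_, fun hy => ?_⟩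
  · rintro ⟨i, rfl⟩
    exact (hZint _ _).2 (hwZ _).1
  · have hfract : Int.fract y ∈ Z := by
      rw [← Int.self_sub_floor, sub_eq_add_neg, ← Int.cast_neg]; exact (hZint _ _).2 hy
    obtain ⟨r, hr⟩ := e.surjective
      ⟨Int.fract y, hfin.mem_toFinset.2 ⟨hfract, Int.fract_nonneg y, Int.fract_lt_one y⟩⟩
    refine ⟨⌊y⌋ * n + r, ?_⟩
    rw [equivariantExtension_apply, hr, Int.fract_add_floor]

end Enumeration

theorem Int.even_of_iff_of_forall_succ_iff_not {s : ℤ → Prop} (hs : ∀ i, s (i + 1) ↔ ¬ s i)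
    {d : ℤ} (hd : s d ↔ s 0) : Even d := by
  have key : ∀ i, s i ↔ (s 0 ↔ Even i) := by
    intro i
    induction i using Int.induction_on with
    | zero => simp
    | succ i ih => rw [hs, ih, Int.even_add_one]; tauto
    | pred i ih =>
      have h1 := hs (-i - 1)
      have h2 := Int.even_add_one (n := -i - 1)
      rw [sub_add_cancel, ih] at h1
      rw [sub_add_cancel] at h2
      tauto
  by_contra h
  rw [key d] at hd
  tauto

theorem exists_index_shift_of_strictMono {α : Type*} [LinearOrder α] {z : ℤ → α}
    (hz : StrictMono z) {Φ : α → α} (hΦ : StrictMono Φ) (hΦs : Surjective Φ)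
    (hZ : ∀ y, Φ y ∈ range z ↔ y ∈ range z) : ∃ d, ∀ i, Φ (z i) = z (i + d) := by
  choose σ hσ using fun i => (hZ (z i)).2 ⟨i, rfl⟩
  have hσmono : StrictMono σ := fun i j hij =>
    hz.lt_iff_lt.1 (by rw [hσ, hσ]; exact hΦ (hz hij))
  have hσsurj : Surjective σ := fun j => by
    obtain ⟨y, hy⟩ := hΦs (z j)
    obtain ⟨i, rfl⟩ := (hZ y).1 ⟨j, hy.symm⟩
    exact ⟨i, hz.injective ((hσ i).trans hy)⟩
  have hsucc : ∀ i, σ (i + 1) = σ i + 1 := fun i => by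
    simpa [Order.succ_eq_add_one] using (hσmono.orderIsoOfSurjective σ hσsurj).map_succ i
  refine ⟨σ 0, fun i => ?_⟩
  rw [← hσ, add_comm]
  congr 1
  induction i using Int.induction_on with
  | zero => simp
  | succ i ih => rw [hsucc, ih, add_assoc]
  | pred i ih => have := hsucc (-i - 1); rw [sub_add_cancel, ih] at this; omega

section Gaps

variable {ψ : ℝ → ℝ} {z : ℤ → ℝ}

def gapPos (ψ : ℝ → ℝ) (z : ℤ → ℝ) (i : ℤ) : Prop :=
  0 < ψ ((z i + z (i + 1)) / 2)

theorem mid_mem_Ioo (hz : StrictMono z) (i : ℤ) :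
    (z i + z (i + 1)) / 2 ∈ Ioo (z i) (z (i + 1)) :=
  ⟨left_lt_add_div_two.2 (hz (lt_add_one i)), add_div_two_lt_right.2 (hz (lt_add_one i))⟩

theorem pos_iff_gapPos (hψ : Continuous ψ) (hz : StrictMono z)
    (hzero : ∀ y, ψ y = 0 → y ∈ range z) {i : ℤ} {y : ℝ}
    (hy : y ∈ Ioo (z i) (z (i + 1))) :
    0 < ψ y ↔ gapPos ψ z i := by
  have hne : ∀ x ∈ Ioo (z i) (z (i + 1)), ψ x ≠ 0 := by
    rintro x ⟨h1, h2⟩ hx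
    obtain ⟨j, rfl⟩ := hzero x hx
    have := hz.lt_iff_lt.1 h1; have := hz.lt_iff_lt.1 h2; omega
  have key : ∀ a ∈ Ioo (z i) (z (i + 1)), ∀ b ∈ Ioo (z i) (z (i + 1)),
      0 < ψ a → 0 < ψ b := by
    intro a ha b hb hpa
    by_contra hpb
    obtain ⟨x, hx, hx0⟩ := isPreconnected_Ioo.intermediate_value hb ha hψ.continuousOn
      ⟨not_lt.1 hpb, hpa.le⟩
    exact hne x hx hx0
  exact ⟨key y hy _ (mid_mem_Ioo hz i), key _ (mid_mem_Ioo hz i) y hy⟩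

theorem gapPos_succ_iff (hψ : Continuous ψ) (hz : StrictMono z)
    (hzero : ∀ y, ψ y = 0 ↔ y ∈ range z) {i : ℤ}
    (hcross : (∃ᶠ y in 𝓝 (z (i + 1)), ψ y < 0) ∧ ∃ᶠ y in 𝓝 (z (i + 1)), 0 < ψ y) :
    gapPos ψ z (i + 1) ↔ ¬ gapPos ψ z i := by
  have hnhds : Ioo (z i) (z (i + 1 + 1)) ∈ 𝓝 (z (i + 1)) :=
    Ioo_mem_nhds (hz (lt_add_one i)) (hz (lt_add_one _))
  have hside : ∀ y ∈ Ioo (z i) (z (i + 1 + 1)), ψ y ≠ 0 →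
      y ∈ Ioo (z i) (z (i + 1)) ∨ y ∈ Ioo (z (i + 1)) (z (i + 1 + 1)) := by
    rintro y ⟨h1, h2⟩ hy
    rcases lt_trichotomy y (z (i + 1)) with h | rfl | h
    · exact Or.inl ⟨h1, h⟩
    · exact absurd ((hzero _).2 ⟨_, rfl⟩) hy
    · exact Or.inr ⟨h, h2⟩
  obtain ⟨y₁, hψ₁, hy₁⟩ := (hcross.1.and_eventually hnhds).exists
  obtain ⟨y₂, hψ₂, hy₂⟩ := (hcross.2.and_eventually hnhds).exists
  have hzero' : ∀ y, ψ y = 0 → y ∈ range z := fun y => (hzero y).1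
  have hnot₁ : ¬ 0 < ψ y₁ := lt_asymm hψ₁
  rcases hside y₁ hy₁ hψ₁.ne with h₁ | h₁ <;>
    rcases hside y₂ hy₂ hψ₂.ne' with h₂ | h₂ <;>
  · have e₁ := pos_iff_gapPos hψ hz hzero' h₁
    have e₂ := pos_iff_gapPos hψ hz hzero' h₂
    tauto

theorem gapPos_add_iff_of_index_shift (hψ : Continuous ψ) (hz : StrictMono z)
    (hzero : ∀ y, ψ y = 0 → y ∈ range z) {Φ : ℝ → ℝ} (hΦ : StrictMono Φ) {d : ℤ}
    (hd : ∀ i, Φ (z i) = z (i + d)) (hsign : ∀ y, 0 < ψ (Φ y) ↔ 0 < ψ y) (i : ℤ) :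
    gapPos ψ z (i + d) ↔ gapPos ψ z i := by
  obtain ⟨h1, h2⟩ := mid_mem_Ioo hz i
  have hmem : Φ ((z i + z (i + 1)) / 2) ∈ Ioo (z (i + d)) (z (i + d + 1)) :=
    ⟨hd i ▸ hΦ h1, add_right_comm i d 1 ▸ hd (i + 1) ▸ hΦ h2⟩
  rw [← pos_iff_gapPos hψ hz hzero hmem, hsign, gapPos]

theorem even_of_index_shift (hψ : Continuous ψ) (hz : StrictMono z)
    (hzero : ∀ y, ψ y = 0 ↔ y ∈ range z)
    (hcross : ∀ i, (∃ᶠ y in 𝓝 (z i), ψ y < 0) ∧ ∃ᶠ y in 𝓝 (z i), 0 < ψ y)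
    {Φ : ℝ → ℝ} (hΦ : StrictMono Φ) {d : ℤ} (hd : ∀ i, Φ (z i) = z (i + d))
    (hsign : ∀ y, 0 < ψ (Φ y) ↔ 0 < ψ y) : Even d :=
  Int.even_of_iff_of_forall_succ_iff_not (fun i => gapPos_succ_iff hψ hz hzero (hcross (i + 1)))
    (by simpa using gapPos_add_iff_of_index_shift hψ hz (fun y => (hzero y).1) hΦ hd hsign 0)

end Gaps

theorem dvd_and_even_div_of_mul_eq_mul {q n : ℕ} {c d : ℤ} (hcq : IsCoprime c q)
    (h : (q : ℤ) * d = n * c) (hd : Even d) (hn : Even (n : ℤ)) : q ∣ n ∧ Even (n / q) := by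
  obtain ⟨k, rfl⟩ : q ∣ n :=
    Int.natCast_dvd_natCast.1 (hcq.symm.dvd_of_dvd_mul_right ⟨d, h.symm⟩)
  refine ⟨dvd_mul_right q k, ?_⟩
  rcases Nat.eq_zero_or_pos q with rfl | hq
  · simp
  rw [Nat.mul_div_cancel_left k hq]
  have hdk : d = k * c :=
    mul_left_cancel₀ (by positivity : (q : ℤ) ≠ 0) (by rw [h]; push_cast; ring)
  by_contra hk
  have hc : Even c := (Int.even_mul.1 (hdk ▸ hd)).resolve_left (by exact_mod_cast hk)
  have hq2 : ¬ Even (q : ℤ) := fun hq2 => by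
    have := hcq.isUnit_of_dvd' hc.two_dvd hq2.two_dvd
    norm_num [Int.isUnit_iff] at this
  push_cast at hn
  exact (Int.even_mul.1 hn).elim hq2 (by exact_mod_cast hk)

theorem CircleDeg1Lift.mul_eq_mul_of_index_shift (L : CircleDeg1Lift) {z : ℤ → ℝ}
    (hz : StrictMono z) {n : ℕ} (hzn : ∀ i, z (i + n) = z i + 1) {d : ℤ}
    (hd : ∀ i, L (z i) = z (i + d)) {q : ℕ} {c : ℤ} (hc : (L ^ q) (z 0) = z 0 + c) :
    (q : ℤ) * d = n * c := by
  have hpow : ∀ j : ℕ, (L ^ j) (z 0) = z (j * d) := by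
    intro j
    induction j with
    | zero => simp
    | succ j ih => rw [pow_succ', CircleDeg1Lift.mul_apply, ih, hd]; push_cast; ring_nf
  have htrans : ∀ j : ℤ, z (n * j) = z 0 + j := by
    intro j
    induction j using Int.induction_on with
    | zero => simp
    | succ j ih => rw [mul_add, mul_one, hzn, ih]; push_cast; ring
    | pred j ih =>
      have := hzn (n * (-j - 1))
      rw [show n * (-(j : ℤ) - 1) + n = n * -j by ring, ih] at this
      push_cast at this ⊢; linarith
  exact hz.injective (by rw [← hpow, hc, htrans])

theorem CircleDeg1Lift.dvd_and_even_div_of_frequently (L : CircleDeg1Lift) (hL : StrictMono L)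
    (hLc : Continuous L) {q n : ℕ} {c : ℤ} (hcq : IsCoprime c q) (hn : 0 < n)
    (hcard : ({y | (L ^ q) y = y + c} ∩ Ico 0 1).encard = n)
    (hcross : ∀ y, (L ^ q) y = y + c →
      (∃ᶠ w in 𝓝 y, (L ^ q) w < w + c) ∧ ∃ᶠ w in 𝓝 y, w + c < (L ^ q) w) :
    q ∣ n ∧ Even (n / q) := by
  have : NeZero n := ⟨hn.ne'⟩
  set ψ : ℝ → ℝ := fun y => (L ^ q) y - c - y with hψ_def
  have hψ : Continuous ψ := by
    simp only [hψ_def, CircleDeg1Lift.coe_pow]; fun_prop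
  have hψ_eq : ∀ y, ψ y = 0 ↔ (L ^ q) y = y + c := fun y => by
    simp only [hψ_def]; constructor <;> intro h <;> linarith
  have hψ_add_one : ∀ y, ψ (y + 1) = ψ y := fun y => by
    simp only [hψ_def, CircleDeg1Lift.map_add_one]; ring
  -- `L` commutes with `L ^ q` and with integer translations
  have hψL : ∀ y, ψ (L y) = L ((L ^ q) y - c) - L y := fun y => by
    simp only [hψ_def, CircleDeg1Lift.map_sub_int, ← CircleDeg1Lift.mul_apply, ← pow_succ,
      ← pow_succ']
  obtain ⟨z, hz, hrange, hzn⟩ := exists_strictMono_enum (Z := {y | ψ y = 0})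
    (fun y => show ψ (y + 1) = 0 ↔ ψ y = 0 by rw [hψ_add_one])
    (by simpa only [hψ_eq] using hcard)
  have hzero : ∀ y, ψ y = 0 ↔ y ∈ range z := fun y => by rw [hrange]; rfl
  have hsign : ∀ i, (∃ᶠ y in 𝓝 (z i), ψ y < 0) ∧ ∃ᶠ y in 𝓝 (z i), 0 < ψ y := by
    intro i
    obtain ⟨hneg, hpos⟩ := hcross (z i) ((hψ_eq _).1 ((hzero _).2 ⟨i, rfl⟩))
    exact ⟨hneg.mono fun y hy => by simp only [hψ_def]; linarith,
      hpos.mono fun y hy => by simp only [hψ_def]; linarith⟩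
  have hn_even : Even (n : ℤ) := even_of_index_shift hψ hz hzero hsign (Φ := (· + 1))
    (strictMono_id.add_const 1) (fun i => (hzn i).symm) (fun y => by rw [hψ_add_one])
  obtain ⟨d, hd⟩ := exists_index_shift_of_strictMono hz hL
    (L.continuous_iff_surjective.1 hLc)
    (fun y => by
      rw [← hzero, ← hzero, hψL, sub_eq_zero, hL.injective.eq_iff, hψ_def, sub_eq_zero])
  have hd_even : Even d := even_of_index_shift hψ hz hzero hsign hL hd
    (fun y => by rw [hψL, sub_pos, hL.lt_iff_lt, hψ_def, sub_pos])
  have hc : (L ^ q) (z 0) = z 0 + c := (hψ_eq _).1 ((hzero _).2 ⟨0, rfl⟩)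
  exact dvd_and_even_div_of_mul_eq_mul hcq (L.mul_eq_mul_of_index_shift hz hzn hd hc) hd_even
    hn_even

section SineModel

def sinPerturb (n : ℕ) (x : ℝ) : ℝ :=
  x + sin (π * n * x) / (2 * π * n)

variable {n : ℕ}

theorem sinPerturb_sub_self (x : ℝ) : sinPerturb n x - x = sin (π * n * x) / (2 * π * n) :=
  add_sub_cancel_left _ _

theorem sinPerturb_zero : sinPerturb n 0 = 0 := by simp [sinPerturb]

theorem continuous_sinPerturb : Continuous (sinPerturb n) := by
  unfold sinPerturb; fun_prop

theorem strictMono_sinPerturb (hn : 0 < n) : StrictMono (sinPerturb n) := by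
  have hderiv : ∀ x, HasDerivAt (sinPerturb n) (1 + cos (π * n * x) / 2) x := fun x => by
    have h := (hasDerivAt_id x).add
      ((((hasDerivAt_id x).const_mul (π * n)).sin).div_const (2 * π * n))
    exact h.congr_deriv (by simp only [id]; field_simp)
  refine strictMono_of_deriv_pos fun x => ?_
  rw [(hderiv x).deriv]
  linarith [neg_one_le_cos (π * n * x)]

theorem sinPerturb_add_of_mul_eq (x : ℝ) {r : ℝ} {m : ℤ} (hr : n * r = 2 * m) :
    sinPerturb n (x + r) = sinPerturb n x + r := by
  have h : π * n * (x + r) = π * n * x + m * (2 * π) := by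
    rw [mul_add, mul_assoc π (n : ℝ) r, hr]; ring
  rw [sinPerturb, sinPerturb, h, sin_add_int_mul_two_pi]; ring

theorem sinPerturb_lt_self_iff (hn : 0 < n) {x : ℝ} :
    sinPerturb n x < x ↔ sin (π * n * x) < 0 := by
  rw [← sub_neg, sinPerturb_sub_self, div_lt_iff₀ (by positivity), zero_mul]

theorem lt_sinPerturb_self_iff (hn : 0 < n) {x : ℝ} :
    x < sinPerturb n x ↔ 0 < sin (π * n * x) := by
  rw [← sub_pos, sinPerturb_sub_self, div_pos_iff_of_pos_right (by positivity)]

theorem sinPerturb_eq_self_iff (hn : 0 < n) {x : ℝ} :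
    sinPerturb n x = x ↔ sin (π * n * x) = 0 := by
  rw [← sub_eq_zero, sinPerturb_sub_self, div_eq_zero_iff, or_iff_left (by positivity)]

theorem encard_sin_eq_zero_inter_Ico (hn : 0 < n) :
    ({y : ℝ | sin (π * n * y) = 0} ∩ Ico 0 1).encard = n := by
  have hn' : (0 : ℝ) < n := by positivity
  have hset : {y : ℝ | sin (π * n * y) = 0} ∩ Ico 0 1 =
      (fun j : ℕ => (j : ℝ) / n) '' (Finset.range n : Set ℕ) := by
    ext y
    simp only [mem_inter_iff, mem_ofPred_eq, mem_Ico, Finset.coe_range, mem_image, mem_Iio]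
    constructor
    · rintro ⟨hy, hy0, hy1⟩
      obtain ⟨j, hj⟩ := sin_eq_zero_iff.1 hy
      have hjy : (j : ℝ) = n * y := mul_right_cancel₀ pi_ne_zero (by rw [hj]; ring)
      have hj0 : 0 ≤ j := by
        have : (0 : ℝ) ≤ j := by rw [hjy]; positivity
        exact_mod_cast this
      have hjn : j < n := by
        have : (j : ℝ) < n := by rw [hjy]; nlinarith
        exact_mod_cast this
      refine ⟨j.toNat, by omega, ?_⟩
      rw [show ((j.toNat : ℕ) : ℝ) = j by exact_mod_cast Int.toNat_of_nonneg hj0, hjy]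
      field_simp
    · rintro ⟨j, hj, rfl⟩
      refine ⟨?_, by positivity, (div_lt_one hn').2 (by exact_mod_cast hj)⟩
      rw [show π * n * (j / n) = (j : ℤ) * π by push_cast; field_simp]
      exact sin_int_mul_pi j
  rw [hset, InjOn.encard_image, encard_coe_eq_coe_finsetCard, Finset.card_range]
  intro a _ b _ hab
  exact_mod_cast (div_left_inj' hn'.ne').1 hab

theorem frequently_sin_neg_and_pos {a x : ℝ} (ha : 0 < a) (hx : sin (a * x) = 0) :
    (∃ᶠ y in 𝓝 x, sin (a * y) < 0) ∧ ∃ᶠ y in 𝓝 x, 0 < sin (a * y) := by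
  have hcos : cos (a * x) ≠ 0 := fun h => by simpa [hx, h] using sin_sq_add_cos_sq (a * x)
  have hsmall : ∀ᶠ δ in 𝓝[>] (0 : ℝ), 0 < sin (a * δ) := by
    filter_upwards [Ioo_mem_nhdsGT (show (0 : ℝ) < π / a by positivity)] with δ hδ
    exact sin_pos_of_pos_of_lt_pi (mul_pos ha hδ.1) (by linarith [(lt_div_iff₀ ha).1 hδ.2])
  have hright : Tendsto (fun δ => x + δ) (𝓝[>] 0) (𝓝 x) :=
    tendsto_nhdsWithin_of_tendsto_nhds (by simpa using (continuous_const_add x).tendsto 0)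
  have hleft : Tendsto (fun δ => x - δ) (𝓝[>] 0) (𝓝 x) :=
    tendsto_nhdsWithin_of_tendsto_nhds (by simpa using ((continuous_sub_left x).tendsto 0))
  have hsin_add : ∀ δ, sin (a * (x + δ)) = cos (a * x) * sin (a * δ) := fun δ => by
    rw [mul_add, sin_add, hx]; ring
  have hsin_sub : ∀ δ, sin (a * (x - δ)) = -(cos (a * x) * sin (a * δ)) := fun δ => by
    rw [mul_sub, sin_sub, hx]; ring
  rcases hcos.lt_or_gt with h | h
  · exact ⟨hright.frequently (hsmall.mono fun δ hδ => by rw [hsin_add]; nlinarith).frequently,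
      hleft.frequently (hsmall.mono fun δ hδ => by rw [hsin_sub]; nlinarith).frequently⟩
  · exact ⟨hleft.frequently (hsmall.mono fun δ hδ => by rw [hsin_sub]; nlinarith).frequently,
      hright.frequently (hsmall.mono fun δ hδ => by rw [hsin_add]; nlinarith).frequently⟩

end SineModel

section Construction

def CircleDeg1Lift.toHomeomorph (L : CircleDeg1Lift) (hL : StrictMono L) (hLc : Continuous L) :
    ℝ ≃ₜ ℝ :=
  (hL.orderIsoOfSurjective L (L.continuous_iff_surjective.1 hLc)).toHomeomorph

open AddConstMap in
theorem UnitAddCircle.coe_apply_eq_of_coe_eq {g : ℝ → ℝ} (hg : ∀ x, g (x + 1) = g x + 1)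
    {a b : ℝ} (h : (a : UnitAddCircle) = b) : (g a : UnitAddCircle) = g b := by
  obtain ⟨k, rfl⟩ := UnitAddCircle.coe_eq_coe_iff_exists_int.1 h
  exact UnitAddCircle.coe_eq_coe_iff_exists_int.2
    ⟨k, AddConstMapClass.map_add_int (⟨g, hg⟩ : ℝ →+c[(1 : ℝ), (1 : ℝ)] ℝ) a k⟩

def circleHomeomorphOfLift (F : ℝ ≃ₜ ℝ) (hF : ∀ x, F (x + 1) = F x + 1) :
    UnitAddCircle ≃ₜ UnitAddCircle :=
  have hF' : ∀ x, F.symm (x + 1) = F.symm x + 1 := fun x =>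
    F.injective (by rw [hF, F.apply_symm_apply, F.apply_symm_apply])
  { toFun := Quotient.map' F fun _ _ h =>
      Quotient.exact' (UnitAddCircle.coe_apply_eq_of_coe_eq hF (Quotient.sound' h))
    invFun := Quotient.map' F.symm fun _ _ h =>
      Quotient.exact' (UnitAddCircle.coe_apply_eq_of_coe_eq hF' (Quotient.sound' h))
    left_inv := fun x => by
      induction x using QuotientAddGroup.induction_on with
      | H x => exact congrArg _ (F.symm_apply_apply x)
    right_inv := fun x => by
      induction x using QuotientAddGroup.induction_on with
      | H x => exact congrArg _ (F.apply_symm_apply x)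
    continuous_toFun := F.continuous.quotient_map' _
    continuous_invFun := F.symm.continuous.quotient_map' _ }

theorem isLift_circleHomeomorphOfLift {F : ℝ ≃ₜ ℝ} (hF : StrictMono F)
    (h1 : ∀ x, F (x + 1) = F x + 1) : IsLift F (circleHomeomorphOfLift F h1) :=
  ⟨hF, h1, fun _ => rfl⟩

end Construction

theorem exists_circleDeg1Lift_sinPerturb {q k : ℕ} (p : ℕ) (hq : 0 < q) (hk : 0 < k)
    (hke : Even k) : ∃ L : CircleDeg1Lift, StrictMono L ∧ Continuous L ∧
      ∀ y, (L ^ q) y = (sinPerturb (q * k))^[q] y + p := by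
  obtain ⟨m, hm⟩ := hke
  have hS := strictMono_sinPerturb (Nat.mul_pos hq hk)
  have hS1 : ∀ x, sinPerturb (q * k) (x + 1) = sinPerturb (q * k) x + 1 := fun x =>
    sinPerturb_add_of_mul_eq x (m := q * m) (by push_cast [hm]; ring)
  have hSa : ∀ x, sinPerturb (q * k) (x + p / q) = sinPerturb (q * k) x + p / q := fun x =>
    sinPerturb_add_of_mul_eq x (m := m * p) (by push_cast [hm]; field_simp; ring)
  let L : CircleDeg1Lift :=
    ⟨⟨fun x => sinPerturb (q * k) x + p / q, fun a b h => by simpa using hS.monotone h⟩,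
      fun x => by simp only; rw [hS1]; ring⟩
  refine ⟨L, fun a b h => add_lt_add_left (hS h) _, continuous_sinPerturb.add continuous_const,
    fun y => ?_⟩
  have hcomm : Function.Commute (· + (p / q : ℝ)) (sinPerturb (q * k)) := fun x => (hSa x).symm
  rw [CircleDeg1Lift.coe_pow, show ⇑L = (· + (p / q : ℝ)) ∘ sinPerturb (q * k) from rfl,
    hcomm.comp_iterate, Function.comp_apply, add_right_iterate_apply, nsmul_eq_mul]
  field_simp

theorem exists_isCrossingPeriodicPt_of_even {p q k : ℕ} (hpq : Nat.Coprime p q) (hq : 0 < q)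
    (hk : 0 < k) (hke : Even k) :
    ∃ f : UnitAddCircle ≃ₜ UnitAddCircle, (∃ F : ℝ ≃ₜ ℝ, IsLift F f) ∧
      HasRotationNumber f ((p / q : ℝ) : UnitAddCircle) ∧
      (periodicPts f).encard = (q * k : ℕ) ∧
      ∀ x ∈ periodicPts f, IsCrossingPeriodicPt f x := by
  have hn : 0 < q * k := Nat.mul_pos hq hk
  obtain ⟨L, hL, hLc, hpow⟩ := exists_circleDeg1Lift_sinPerturb p hq hk hke
  have hF := isLift_circleHomeomorphOfLift (F := L.toHomeomorph hL hLc) hL L.map_add_one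
  have hLF : hF.circleDeg1Lift = L := CircleDeg1Lift.ext fun _ => rfl
  have hτ : hF.circleDeg1Lift.translationNumber = (p : ℤ) / q := by
    rw [hLF, L.translationNumber_eq_rat_iff hLc hq]
    exact ⟨0, by rw [hpow, Function.iterate_fixed sinPerturb_zero]; simp⟩
  have hcq : IsCoprime (p : ℤ) q := Nat.isCoprime_iff_coprime.2 hpq
  have hS := strictMono_sinPerturb hn
  have heq : ∀ y, (hF.circleDeg1Lift ^ q) y = y + (p : ℤ) ↔
      sin (π * (q * k : ℕ) * y) = 0 := fun y => by
    rw [hLF, hpow, Int.cast_natCast, add_left_inj, hS.iterate_eq_self_iff hq,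
      sinPerturb_eq_self_iff hn]
  have hlt : ∀ y, (hF.circleDeg1Lift ^ q) y < y + (p : ℤ) ↔
      sin (π * (q * k : ℕ) * y) < 0 := fun y => by
    rw [hLF, hpow, Int.cast_natCast, add_lt_add_iff_right, hS.iterate_lt_self_iff hq,
      sinPerturb_lt_self_iff hn]
  have hgt : ∀ y, y + (p : ℤ) < (hF.circleDeg1Lift ^ q) y ↔
      0 < sin (π * (q * k : ℕ) * y) := fun y => by
    rw [hLF, hpow, Int.cast_natCast, add_lt_add_iff_right, hS.lt_iterate_self_iff hq,
      lt_sinPerturb_self_iff hn]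
  refine ⟨_, ⟨_, hF⟩, ⟨_, hF, by rw [hτ]; push_cast; rfl⟩, ?_, ?_⟩
  · rw [hF.encard_periodicPts hq hτ hcq, ← encard_sin_eq_zero_inter_Ico hn]
    simp only [heq]
  · rw [hF.forall_isCrossingPeriodicPt_iff hq hτ hcq]
    intro y hy
    obtain ⟨hneg, hpos⟩ := frequently_sin_neg_and_pos (by positivity) ((heq y).1 hy)
    exact ⟨hneg.mono fun w hw => (hlt w).2 hw, hpos.mono fun w hw => (hgt w).2 hw⟩

/-- For coprime `0 ≤ p < q` and `n ≥ 1`, there is an orientation-preserving circle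
homeomorphism with rotation number `p/q` (mod 1) and exactly `n` periodic points, all
crossing, iff `q ∣ n` and `n / q` is even. -/
theorem stmt_16 (p q n : ℕ) (hpq : Nat.Coprime p q) (hp : p < q) (hn : 0 < n) :
    (∃ f : UnitAddCircle ≃ₜ UnitAddCircle, (∃ F : ℝ ≃ₜ ℝ, IsLift F f) ∧
        HasRotationNumber f ((((p : ℝ) / (q : ℝ)) : UnitAddCircle)) ∧
        (periodicPts ⇑f).encard = (n : ℕ∞) ∧
        ∀ x ∈ periodicPts ⇑f, IsCrossingPeriodicPt f x) ↔
      (q ∣ n ∧ Even (n / q)) := by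
  have hq : 0 < q := Nat.zero_lt_of_lt hp
  constructor
  · rintro ⟨f, -, hrot, hcard, hcross⟩
    obtain ⟨F, hF, c, hcq, hτ⟩ := hrot.exists_translationNumber_eq_div hpq hq
    exact hF.circleDeg1Lift.dvd_and_even_div_of_frequently hF.1 F.continuous hcq hn
      (hF.encard_periodicPts hq hτ hcq ▸ hcard)
      ((hF.forall_isCrossingPeriodicPt_iff hq hτ hcq).1 hcross)
  · rintro ⟨⟨k, rfl⟩, hk⟩
    rw [Nat.mul_div_cancel_left k hq] at hk
    exact exists_isCrossingPeriodicPt_of_even hpq hq (Nat.pos_of_mul_pos_left hn) hk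
end
end

section
/- For every irrational α ∈ S¹ = ℝ/ℤ (i.e. α is not the residue of a rational number), the set {f ∈ Homeo⁺(S¹) : τ(f) = α} is Haar null in Homeo⁺(S¹). In particular, the conjugacy class of every f ∈ Homeo⁺(S¹) with irrational rotation number is Haar null. -/
open MeasureTheory Set Function

noncomputable section

/-! The rotation number is a Borel function on `Homeo⁺(S¹)`: it is the translation number
`lim Fⁿ 0 / n` of a lift `F` given by an explicit measurable formula. The witness measure is the
law of a uniformly random rotation `R_t`. For fixed `g, h`, a lift of `g R_t h` is conjugate to
`T_t A` for a fixed lift `A`, and the translation number of `T_t A` strictly increases in `t`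
wherever it is irrational; so only countably many `t` give rotation number `α`. Conjugacy classes
are covered because the rotation number is a conjugacy invariant. -/

local notation "S¹" => UnitAddCircle
local notation "τ" => CircleDeg1Lift.translationNumber

open CircleDeg1Lift Multiplicative

lemma IsHaarNull.mono {G : Type*} [Group G] [MeasurableSpace G] {A B : Set G}
    (hB : IsHaarNull B) (hAB : A ⊆ B) : IsHaarNull A :=
  let ⟨C, hBC, hC⟩ := hB
  ⟨C, hAB.trans hBC, hC⟩

lemma isHaarNull_of_countable {G : Type*} [Group G] [MeasurableSpace G] {S : Set G}
    (hS : MeasurableSet S) (hmul : ∀ g h : G, Measurable fun b => g * b * h)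
    {ρ : ℝ → G} (hρ : Measurable ρ) (hcount : ∀ g h : G, {t | g * ρ t * h ∈ S}.Countable) :
    IsHaarNull S := by
  have : IsProbabilityMeasure (volume.restrict (Ioc (0 : ℝ) 1)) := ⟨by simp⟩
  refine ⟨S, subset_rfl, hS, (volume.restrict (Ioc (0 : ℝ) 1)).map ρ,
    Measure.isProbabilityMeasure_map hρ.aemeasurable, fun g h => ?_⟩
  have himage : (fun b => g * b * h) '' S = (fun b => g⁻¹ * b * h⁻¹) ⁻¹' S :=
    congrFun (image_eq_preimage_of_inverse (f := fun b => g * b * h)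
      (g := fun b => g⁻¹ * b * h⁻¹) (fun b => by group) (fun b => by group)) S
  rw [himage, Measure.map_apply hρ (hmul _ _ hS)]
  exact (hcount _ _).measure_zero _

lemma UnitAddCircle.coe_add_intCast (a : ℝ) (m : ℤ) : ((a + m : ℝ) : S¹) = a := by
  rw [AddCircle.coe_add, add_eq_left, AddCircle.coe_eq_zero_iff]
  exact ⟨m, by simp⟩

lemma UnitAddCircle.exists_eq_add_intCast_of_coe_eq {a b : ℝ} (h : (a : S¹) = b) :
    ∃ m : ℤ, a = b + m := by
  obtain ⟨m, hm⟩ := (AddCircle.coe_eq_zero_iff 1).1 (by rw [AddCircle.coe_sub, h, sub_self] :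
    ((a - b : ℝ) : S¹) = 0)
  exact ⟨m, by simp at hm; linarith⟩

/-- The lift of `f` normalised by `0 ≤ F 0 < 1`, written so that it is visibly measurable
in `f`. -/
def explicitLift (f : S¹ → S¹) (x : ℝ) : ℝ :=
  (AddCircle.equivIco 1 0 (f 0) : ℝ) + ⌊x⌋ + (AddCircle.equivIco 1 0 (f x - f 0) : ℝ)

namespace CircleDeg1Lift

lemma translationNumber_translate_intCast_mul (F : CircleDeg1Lift) (m : ℤ) :
    τ (translate (ofAdd (m : ℝ)) * F) = m + τ F := by
  have hcomm : Commute (translate (ofAdd (m : ℝ)) : CircleDeg1Lift) F := by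
    ext x
    simp [translate_apply]
  rw [translationNumber_mul_of_commute hcomm, translationNumber_translate]

lemma pow_succ_add_le {f g : CircleDeg1Lift} {c : ℝ} (hc : 0 ≤ c) (h : ∀ x, f x + c ≤ g x)
    (n : ℕ) (x : ℝ) : (f ^ (n + 1)) x + c ≤ (g ^ (n + 1)) x := by
  have hle : (f ^ n) x ≤ (g ^ n) x := by
    rw [coe_pow, coe_pow]
    exact f.monotone.iterate_le_of_le (fun y => (le_add_of_nonneg_right hc).trans (h y)) n x
  rw [pow_succ', pow_succ', mul_apply, mul_apply]
  exact (h _).trans (g.monotone hle)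

/-- Dirichlet approximation gives `q β` within `c` of an integer `p`, and the `c`-gap between
`f ^ q` and `g ^ q` then separates one of their translation numbers from `q β`. -/
lemma translationNumber_lt_of_add_le {f g : CircleDeg1Lift} {c : ℝ} (hc : 0 < c)
    (h : ∀ x, f x + c ≤ g x) (hf : Irrational (τ f)) : τ f < τ g := by
  refine (translationNumber_mono fun x => (le_add_of_nonneg_right hc.le).trans (h x)).lt_of_ne ?_
  intro hfg
  set β := τ f
  obtain ⟨N, hN⟩ := exists_nat_one_div_lt hc
  obtain ⟨q, hq, -, hqβ⟩ := Real.exists_nat_abs_mul_sub_round_le β N.succ_pos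
  set p := round (q * β)
  have hτf : τ (f ^ q) = q * β := translationNumber_pow f q
  have hτg : τ (g ^ q) = q * β := by rw [translationNumber_pow, ← hfg]
  have hpow := pow_succ_add_le hc.le h (q - 1)
  rw [Nat.sub_add_cancel hq] at hpow
  have hclose : |q * β - p| < c := calc
    _ ≤ 1 / ((N.succ : ℝ) + 1) := hqβ
    _ ≤ 1 / ((N : ℝ) + 1) := by gcongr; simp
    _ < c := hN
  rcases (show (q * β : ℝ) ≠ p from ((hf.natCast_mul hq.ne').ne_int p)).lt_or_gt with hlt | hgt
  · have hbound : τ (f ^ q) ≤ p - c := (f ^ q).translationNumber_le_of_le_add fun x => by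
      linarith [hpow x, (g ^ q).map_lt_of_translationNumber_lt_int (hτg ▸ hlt) x]
    linarith [abs_lt.1 hclose]
  · have hbound : p + c ≤ τ (g ^ q) := (g ^ q).le_translationNumber_of_add_le fun x => by
      linarith [hpow x, (f ^ q).lt_map_of_int_lt_translationNumber (hτf ▸ hgt) x]
    linarith [abs_lt.1 hclose]

lemma countable_setOf_translate_mul (A : CircleDeg1Lift) {α : ℝ} (hα : Irrational α) :
    {t : ℝ | ∃ m : ℤ, τ (translate (ofAdd t) * A) = α + m}.Countable := by
  refine MapsTo.countable_of_injOn (f := fun t => τ (translate (ofAdd t) * A))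
    (by rintro t ⟨m, hm⟩; exact ⟨m, hm.symm⟩)
    (StrictMonoOn.injOn fun t₁ ⟨m, hm⟩ t₂ _ hlt => ?_) (countable_range fun m : ℤ => α + m)
  refine translationNumber_lt_of_add_le (sub_pos.2 hlt) (fun x => ?_) (hm ▸ hα.add_intCast m)
  simp only [mul_apply, translate_apply]
  linarith

variable {F G : CircleDeg1Lift} {f : S¹ → S¹}

def IsLiftOf (F : CircleDeg1Lift) (f : S¹ → S¹) : Prop :=
  StrictMono F ∧ ∀ x : ℝ, f x = F x

lemma IsLiftOf.mul {g : S¹ → S¹} (hF : F.IsLiftOf f) (hG : G.IsLiftOf g) :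
    (F * G).IsLiftOf (f ∘ g) :=
  ⟨hF.1.comp hG.1, fun x => by simp [hG.2 x, hF.2]⟩

lemma isLiftOf_translate (t : ℝ) :
    (translate (ofAdd t) : CircleDeg1Lift).IsLiftOf ((t : S¹) + ·) :=
  ⟨fun a b hab => by simpa [translate_apply], fun x => by simp [translate_apply]⟩

lemma IsLiftOf.floor_sub_map_zero (hF : F.IsLiftOf f) (x : ℝ) : ⌊F x - F 0⌋ = ⌊x⌋ := by
  rw [Int.floor_eq_iff, le_sub_iff_add_le', sub_lt_iff_lt_add']
  constructor
  · simpa [map_int_of_map_zero] using F.monotone (Int.floor_le x)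
  · simpa [map_int_of_map_zero, add_assoc] using hF.1 (Int.lt_floor_add_one x)

lemma IsLiftOf.explicitLift_eq (hF : F.IsLiftOf f) (x : ℝ) :
    explicitLift f x = F x - ⌊F 0⌋ := by
  have h0 : f 0 = (F 0 : S¹) := by simpa using hF.2 0
  rw [explicitLift, h0, hF.2 x, ← AddCircle.coe_sub, AddCircle.coe_equivIco_mk_apply,
    AddCircle.coe_equivIco_mk_apply, div_one, div_one, mul_one, mul_one, Int.fract, Int.fract,
    hF.floor_sub_map_zero]
  ring

lemma IsLiftOf.eq_translate_mul (hF : F.IsLiftOf f) (hG : G.IsLiftOf f) :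
    ∃ m : ℤ, G = translate (ofAdd (m : ℝ)) * F := by
  refine ⟨⌊G 0⌋ - ⌊F 0⌋, ext fun x => ?_⟩
  have hFx := hF.explicitLift_eq x
  have hGx := hG.explicitLift_eq x
  simp only [mul_apply, translate_apply, Int.cast_sub]
  linarith

lemma IsLiftOf.coe_translationNumber_eq (hF : F.IsLiftOf f) (hG : G.IsLiftOf f) :
    (τ G : S¹) = τ F := by
  obtain ⟨m, rfl⟩ := hF.eq_translate_mul hG
  rw [translationNumber_translate_intCast_mul, add_comm, UnitAddCircle.coe_add_intCast]

end CircleDeg1Lift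

namespace HomeoPlusCircle

lemma exists_isLiftOf (f : HomeoPlusCircle) :
    ∃ F : CircleDeg1Lift, F.IsLiftOf (f : S¹ ≃ₜ S¹) :=
  let ⟨F, hF⟩ := f.2
  ⟨toCircleDeg1Lift F hF.1.monotone hF.2.1, hF.1, hF.2.2⟩

def stdLift (f : HomeoPlusCircle) : CircleDeg1Lift where
  toFun := explicitLift (f : S¹ ≃ₜ S¹)
  monotone' a b hab := by
    obtain ⟨F, hF⟩ := exists_isLiftOf f
    simp only [hF.explicitLift_eq]
    linarith [hF.1.monotone hab]
  map_add_one' x := by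
    obtain ⟨F, hF⟩ := exists_isLiftOf f
    simp only [hF.explicitLift_eq, map_add_one]
    ring

lemma isLiftOf_stdLift (f : HomeoPlusCircle) : (stdLift f).IsLiftOf (f : S¹ ≃ₜ S¹) := by
  obtain ⟨F, hF⟩ := exists_isLiftOf f
  have h : ∀ x, stdLift f x = F x - ⌊F 0⌋ := hF.explicitLift_eq
  refine ⟨fun a b hab => by simp only [h]; linarith [hF.1 hab], fun x => ?_⟩
  rw [h, sub_eq_add_neg, ← Int.cast_neg, UnitAddCircle.coe_add_intCast, hF.2]

def rotationNumber (f : HomeoPlusCircle) : S¹ := τ (stdLift f)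

lemma rotationNumber_eq {f : HomeoPlusCircle} {F : CircleDeg1Lift}
    (hF : F.IsLiftOf (f : S¹ ≃ₜ S¹)) : rotationNumber f = τ F :=
  ((isLiftOf_stdLift f).coe_translationNumber_eq hF).symm

lemma hasRotationNumber_iff {f : HomeoPlusCircle} {α : S¹} :
    HasRotationNumber f α ↔ rotationNumber f = α := by
  constructor
  · rintro ⟨F, hF, rfl⟩
    exact rotationNumber_eq ⟨hF.1, hF.2.2⟩
  · intro h
    obtain ⟨F, hF⟩ := f.2
    exact ⟨F, hF, (rotationNumber_eq ⟨hF.1, hF.2.2⟩).symm.trans h⟩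

lemma rotationNumber_conj (f h : HomeoPlusCircle) :
    rotationNumber (h⁻¹ * f * h) = rotationNumber f := by
  obtain ⟨F, hF⟩ := exists_isLiftOf f
  obtain ⟨H, hH⟩ := exists_isLiftOf h
  obtain ⟨K, hK⟩ := exists_isLiftOf (h⁻¹ * f * h)
  have hhk : ((h : S¹ ≃ₜ S¹) ∘ ((h⁻¹ * f * h : HomeoPlusCircle) : S¹ ≃ₜ S¹))
      = (f : S¹ ≃ₜ S¹) ∘ (h : S¹ ≃ₜ S¹) := by
    ext x
    exact (h : S¹ ≃ₜ S¹).apply_symm_apply _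
  obtain ⟨m, hm⟩ := (hF.mul hH).eq_translate_mul (hhk ▸ hH.mul hK)
  have hsemi : SemiconjBy H K (translate (ofAdd (m : ℝ)) * F) := by
    rw [SemiconjBy, hm, mul_assoc]
  rw [rotationNumber_eq hK, rotationNumber_eq hF, translationNumber_eq_of_semiconjBy hsemi,
    translationNumber_translate_intCast_mul, add_comm, UnitAddCircle.coe_add_intCast]

lemma continuous_toContinuousMap :
    Continuous fun f : HomeoPlusCircle => ((f : S¹ ≃ₜ S¹) : C(S¹, S¹)) :=
  (continuous_induced_dom : Continuous fun f : S¹ ≃ₜ S¹ => (⟨f, f.continuous⟩ : C(S¹, S¹))).comp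
    continuous_subtype_val

lemma measurable_explicitLift :
    Measurable fun p : HomeoPlusCircle × ℝ => explicitLift (p.1 : S¹ ≃ₜ S¹) p.2 := by
  have hev : Continuous fun p : HomeoPlusCircle × S¹ => (p.1 : S¹ ≃ₜ S¹) p.2 :=
    continuous_eval.comp ((continuous_toContinuousMap.comp continuous_fst).prodMk continuous_snd)
  have hrep : Measurable fun z : S¹ => (AddCircle.equivIco 1 0 z : ℝ) :=
    measurable_subtype_coe.comp (AddCircle.measurableEquivIco 1 0).measurable
  have hf0 : Continuous fun p : HomeoPlusCircle × ℝ => (p.1 : S¹ ≃ₜ S¹) 0 :=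
    hev.comp (continuous_fst.prodMk continuous_const)
  have hfx : Continuous fun p : HomeoPlusCircle × ℝ => (p.1 : S¹ ≃ₜ S¹) p.2 :=
    hev.comp (continuous_fst.prodMk ((AddCircle.continuous_mk' 1).comp continuous_snd))
  have hfloor : Measurable fun p : HomeoPlusCircle × ℝ => (⌊p.2⌋ : ℝ) :=
    measurable_from_top.comp (Int.measurable_floor.comp measurable_snd)
  exact ((hrep.comp hf0.measurable).add hfloor).add (hrep.comp (hfx.sub hf0).measurable)

lemma measurable_rotationNumber : Measurable rotationNumber := by
  have hiter (n : ℕ) : Measurable fun f : HomeoPlusCircle => (stdLift f ^ n) 0 := by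
    induction n with
    | zero => simp
    | succ n ih =>
      simp only [pow_succ', mul_apply]
      exact measurable_explicitLift.comp (measurable_id.prodMk ih)
  have hτ : Measurable fun f : HomeoPlusCircle => τ (stdLift f) :=
    measurable_of_tendsto_metrizable (fun n => (hiter n).div_const _)
      (tendsto_pi_nhds.2 fun f => (stdLift f).tendsto_translation_number₀)
  exact AddCircle.measurable_mk'.comp hτ

lemma continuous_mul_mul (g h : HomeoPlusCircle) :
    Continuous fun b : HomeoPlusCircle => g * b * h := by
  have hcomp := (ContinuousMap.continuous_postcomp ((g : S¹ ≃ₜ S¹) : C(S¹, S¹))).comp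
    ((ContinuousMap.continuous_precomp ((h : S¹ ≃ₜ S¹) : C(S¹, S¹))).comp
      continuous_toContinuousMap)
  exact (continuous_induced_rng.2 (hcomp.congr fun _ => by ext; rfl)).subtype_mk _

def rotation (t : ℝ) : HomeoPlusCircle :=
  ⟨Homeomorph.addLeft (t : S¹), Homeomorph.addLeft t, fun a b hab => by simpa using hab,
    fun x => by simp [add_assoc], fun x => rfl⟩

lemma continuous_rotation : Continuous rotation := by
  have hjoint : Continuous fun p : ℝ × S¹ => (p.1 : S¹) + p.2 :=
    ((AddCircle.continuous_mk' 1).comp continuous_fst).add continuous_snd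
  exact (continuous_induced_rng.2 ((ContinuousMap.curry ⟨_, hjoint⟩).continuous.congr
    fun _ => by ext; rfl)).subtype_mk _

/-- Conjugating by `translate t * V` turns the lift `U * translate t * V` of `g * rotation t * h`
into `translate t * (V * U)`. -/
lemma countable_setOf_rotationNumber_mul_rotation_mul {α : ℝ} (hα : Irrational α)
    (g h : HomeoPlusCircle) : {t : ℝ | rotationNumber (g * rotation t * h) = α}.Countable := by
  obtain ⟨U, hU⟩ := exists_isLiftOf g
  obtain ⟨V, hV⟩ := exists_isLiftOf h
  refine (countable_setOf_translate_mul (V * U) hα).mono fun t (ht : rotationNumber _ = α) => ?_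
  have hsemi : SemiconjBy (translate (ofAdd t) * V) (U * translate (ofAdd t) * V)
      (translate (ofAdd t) * (V * U)) := by
    simp only [SemiconjBy, mul_assoc]
  rw [rotationNumber_eq ((hU.mul (isLiftOf_translate t)).mul hV),
    translationNumber_eq_of_semiconjBy hsemi] at ht
  exact UnitAddCircle.exists_eq_add_intCast_of_coe_eq ht

end HomeoPlusCircle

open HomeoPlusCircle

/-- For every irrational `α`, the set of `f ∈ Homeo⁺(S¹)` with rotation number `α` (mod 1) is
Haar null; in particular, the conjugacy class of every element with irrational rotation
number is Haar null. -/
theorem stmt_17 (α : ℝ) (hα : Irrational α) :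
    IsHaarNull {f : HomeoPlusCircle |
        HasRotationNumber (f : UnitAddCircle ≃ₜ UnitAddCircle) ((α : UnitAddCircle))} ∧
      ∀ f : HomeoPlusCircle,
        HasRotationNumber (f : UnitAddCircle ≃ₜ UnitAddCircle) ((α : UnitAddCircle)) →
          IsHaarNull {g : HomeoPlusCircle | ∃ h : HomeoPlusCircle, g = h⁻¹ * f * h} := by
  have hset : {f : HomeoPlusCircle | HasRotationNumber (f : S¹ ≃ₜ S¹) α}
      = rotationNumber ⁻¹' {(α : S¹)} :=
    ext fun _ => hasRotationNumber_iff
  have hnull : IsHaarNull {f : HomeoPlusCircle | HasRotationNumber (f : S¹ ≃ₜ S¹) α} := by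
    rw [hset]
    exact isHaarNull_of_countable (measurable_rotationNumber (measurableSet_singleton _))
      (fun g h => (continuous_mul_mul g h).measurable) continuous_rotation.measurable
      (countable_setOf_rotationNumber_mul_rotation_mul hα)
  refine ⟨hnull, fun f hf => hnull.mono ?_⟩
  rintro _ ⟨h, rfl⟩
  exact hasRotationNumber_iff.2 ((rotationNumber_conj f h).trans (hasRotationNumber_iff.1 hf))
end
end
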